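/- arXiv:1002.0733 — 8 statements merged into one kernel-verified Lean document; each statement's English description precedes it below -/
import Mathlib

section
/- Identity for deviations from canonical equilibrium: let B be a finite nonempty type, H_B : Matrix B B ℂ Hermitian, b > 0, and ρ the Gibbs state of H_B at inverse temperature b. Then for every density matrix σ on B, (Matrix.trace ((σ - ρ) * H_B)).re = b⁻¹ * (S(σ‖ρ) + S(σ) - S(ρ)). -/
open Matrix Kronecker
open scoped ComplexOrder

noncomputable section

/-- A density matrix: positive semidefinite with trace 1. -/
def IsDensityMatrix {ι : Type*} [Fintype ι] (ρ : Matrix ι ι ℂ) : Prop :=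
  ρ.PosSemidef ∧ ρ.trace = 1

/-- The matrix exponential. -/
noncomputable def mexp {ι : Type*} [Fintype ι] [DecidableEq ι] (M : Matrix ι ι ℂ) :
    Matrix ι ι ℂ :=
  NormedSpace.exp M

/-- Von Neumann entropy of a (Hermitian) matrix, via its eigenvalues. -/
noncomputable def vnEntropy {ι : Type*} [Fintype ι] [DecidableEq ι] (ρ : Matrix ι ι ℂ) : ℝ :=
  if h : ρ.IsHermitian then -∑ i, h.eigenvalues i * Real.log (h.eigenvalues i) else 0

/-- The Gibbs state of the Hamiltonian `H` at inverse temperature `b`. -/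
noncomputable def gibbs {ι : Type*} [Fintype ι] [DecidableEq ι] (H : Matrix ι ι ℂ) (b : ℝ) :
    Matrix ι ι ℂ :=
  (Matrix.trace (mexp (-b • H)))⁻¹ • mexp (-b • H)

/-- Equilibrium energy of the bath. -/
noncomputable def eqEnergy {ι : Type*} [Fintype ι] [DecidableEq ι] (H : Matrix ι ι ℂ) (b : ℝ) : ℝ :=
  (Matrix.trace (gibbs H b * H)).re

/-- Partial trace over the second (bath) factor. -/
def ptraceB {A B : Type*} [Fintype B] (M : Matrix (A × B) (A × B) ℂ) : Matrix A A ℂ :=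
  Matrix.of fun a a' => ∑ k : B, M (a, k) (a', k)

/-- Partial trace over the first (device) factor. -/
def ptraceA {A B : Type*} [Fintype A] (M : Matrix (A × B) (A × B) ℂ) : Matrix B B ℂ :=
  Matrix.of fun k k' => ∑ a : A, M (a, k) (a, k')

/-- The heat transfer operator of a realization setup. -/
noncomputable def hto {A B : Type*} [Fintype A] [DecidableEq A] [Fintype B] [DecidableEq B]
    (H_B : Matrix B B ℂ) (b : ℝ) (U : Matrix (A × B) (A × B) ℂ) : Matrix A A ℂ :=
  ptraceB (((1 : Matrix A A ℂ) ⊗ₖ gibbs H_B b) * Uᴴ * ((1 : Matrix A A ℂ) ⊗ₖ H_B) * U)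
    - eqEnergy H_B b • (1 : Matrix A A ℂ)

/-- Matrix logarithm of a Hermitian matrix through the continuous functional calculus. -/
noncomputable def mlog {ι : Type*} [Fintype ι] [DecidableEq ι] (ρ : Matrix ι ι ℂ) :
    Matrix ι ι ℂ :=
  if h : ρ.IsHermitian then h.cfc Real.log else 0

/-- Quantum relative entropy `S(σ‖ρ)`. -/
noncomputable def relEntropy {ι : Type*} [Fintype ι] [DecidableEq ι] (σ ρ : Matrix ι ι ℂ) : ℝ :=
  (Matrix.trace (σ * (mlog σ - mlog ρ))).re

end

/-!
With `Z = tr exp(-b H)` the Gibbs state is `Z⁻¹ exp(-b H)`, so its logarithm is the affine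
function `-b H - (log Z) 1` of the Hamiltonian. Hence `tr (X log ρ) = -b tr (X H) - log Z` for
every `X` of trace one. Using this for `X = σ` in `S(σ‖ρ) = -S(σ) - tr (σ log ρ)` and for `X = ρ`
in `S(ρ) = -tr (ρ log ρ)`, the `log Z` terms cancel and what remains is `b tr ((σ - ρ) H)`.
-/

lemma Matrix.nonempty_of_trace_ne_zero {ι R : Type*} [Fintype ι] [AddCommMonoid R]
    {A : Matrix ι ι R} (h : A.trace ≠ 0) : Nonempty ι :=
  not_isEmpty_iff.mp fun _ ↦ h (by simp [Matrix.trace])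

namespace Matrix.IsHermitian

variable {n 𝕜 : Type*} [RCLike 𝕜] [Fintype n] [DecidableEq n] {A : Matrix n n 𝕜}

lemma trace_cfc (hA : A.IsHermitian) (f : ℝ → ℝ) :
    (cfc f A).trace = ((∑ i, f (hA.eigenvalues i) : ℝ) : 𝕜) := by
  rw [hA.cfc_eq, IsHermitian.cfc, Unitary.conjStarAlgAut_apply, trace_mul_cycle,
    Unitary.coe_star_mul_self, one_mul, trace_diagonal, RCLike.ofReal_sum]
  rfl

lemma trace_mul_cfc (hA : A.IsHermitian) (f : ℝ → ℝ) :
    (A * cfc f A).trace = ((∑ i, hA.eigenvalues i * f (hA.eigenvalues i) : ℝ) : 𝕜) := by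
  nth_rw 1 [← cfc_id' ℝ A hA.isSelfAdjoint]
  rw [← cfc_mul (fun x ↦ x) f A continuousOn_id (A.finite_real_spectrum.continuousOn f),
    hA.trace_cfc]

end Matrix.IsHermitian

section

variable {ι : Type*} [Fintype ι] [DecidableEq ι]

-- `CFC.log` needs a normed ring structure on matrices; every matrix norm induces the same
-- topology, so the choice of the L2 operator norm does not affect any statement below.
open scoped Matrix.Norms.L2Operator

lemma mlog_eq_log (A : Matrix ι ι ℂ) : mlog A = CFC.log A := by
  unfold mlog CFC.log
  split_ifs with hA
  · exact (hA.cfc_eq _).symm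
  · exact (cfc_apply_of_not_predicate A hA).symm

lemma vnEntropy_eq_neg_re_trace_mul_log (A : Matrix ι ι ℂ) :
    vnEntropy A = -(A * CFC.log A).trace.re := by
  unfold vnEntropy CFC.log
  split_ifs with hA
  · rw [hA.trace_mul_cfc]
    rfl
  · rw [cfc_apply_of_not_predicate A (show ¬IsSelfAdjoint A from hA)]
    simp

lemma relEntropy_eq_neg_vnEntropy_sub (σ ρ : Matrix ι ι ℂ) :
    relEntropy σ ρ = -vnEntropy σ - (σ * CFC.log ρ).trace.re := by
  rw [relEntropy, vnEntropy_eq_neg_re_trace_mul_log, mlog_eq_log, mlog_eq_log, mul_sub,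
    trace_sub, Complex.sub_re, neg_neg]

lemma mexp_eq_cfc_exp {K : Matrix ι ι ℂ} (hK : K.IsHermitian) : mexp K = cfc Real.exp K :=
  (CFC.real_exp_eq_normedSpace_exp hK.isSelfAdjoint).symm

lemma trace_mexp {K : Matrix ι ι ℂ} (hK : K.IsHermitian) :
    (mexp K).trace = ((∑ i, Real.exp (hK.eigenvalues i) : ℝ) : ℂ) := by
  rw [mexp_eq_cfc_exp hK, hK.trace_cfc]
  rfl

noncomputable def partitionFunction (H : Matrix ι ι ℂ) (b : ℝ) : ℝ := (mexp (-b • H)).trace.re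

variable {H : Matrix ι ι ℂ}

lemma ofReal_partitionFunction (hH : H.IsHermitian) (b : ℝ) :
    (partitionFunction H b : ℂ) = (mexp (-b • H)).trace := by
  rw [partitionFunction, trace_mexp (hH.smul (IsSelfAdjoint.all _)), Complex.ofReal_re]

lemma partitionFunction_pos [Nonempty ι] (hH : H.IsHermitian) (b : ℝ) :
    0 < partitionFunction H b := by
  rw [partitionFunction, trace_mexp (hH.smul (IsSelfAdjoint.all _)), Complex.ofReal_re]
  exact Finset.sum_pos (fun i _ ↦ Real.exp_pos _) Finset.univ_nonempty

lemma gibbs_eq_inv_smul_mexp (hH : H.IsHermitian) (b : ℝ) :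
    gibbs H b = (partitionFunction H b)⁻¹ • mexp (-b • H) := by
  rw [gibbs, ← ofReal_partitionFunction hH, ← Complex.ofReal_inv, Complex.coe_smul]

lemma trace_gibbs [Nonempty ι] (hH : H.IsHermitian) (b : ℝ) : (gibbs H b).trace = 1 := by
  rw [gibbs, trace_smul, ← ofReal_partitionFunction hH, smul_eq_mul,
    inv_mul_cancel₀ (Complex.ofReal_ne_zero.mpr (partitionFunction_pos hH b).ne')]

lemma log_gibbs [Nonempty ι] (hH : H.IsHermitian) (b : ℝ) :
    CFC.log (gibbs H b) = -b • H - Real.log (partitionFunction H b) • (1 : Matrix ι ι ℂ) := by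
  have hK : (-b • H).IsHermitian := hH.smul (IsSelfAdjoint.all _)
  have hspec : ∀ x ∈ spectrum ℝ (mexp (-b • H)), x ≠ 0 := by
    rw [mexp_eq_cfc_exp hK, cfc_map_spectrum Real.exp (-b • H)]
    rintro - ⟨x, -, rfl⟩
    exact (Real.exp_pos x).ne'
  have hsa : IsSelfAdjoint (mexp (-b • H)) := mexp_eq_cfc_exp hK ▸ cfc_predicate _ _
  rw [gibbs_eq_inv_smul_mexp hH,
    CFC.log_smul _ hspec (inv_ne_zero (partitionFunction_pos hH b).ne') hsa,
    mexp, CFC.log_exp _ hK.isSelfAdjoint, Real.log_inv, Algebra.algebraMap_eq_smul_one, neg_smul]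
  abel

lemma re_trace_mul_log_gibbs [Nonempty ι] (hH : H.IsHermitian) (b : ℝ) {X : Matrix ι ι ℂ}
    (hX : X.trace = 1) :
    (X * CFC.log (gibbs H b)).trace.re =
      -b * (X * H).trace.re - Real.log (partitionFunction H b) := by
  rw [log_gibbs hH, mul_sub, mul_smul_comm, mul_smul_comm, mul_one, trace_sub, trace_smul,
    trace_smul, hX]
  simp

end

theorem deviation_from_equilibrium_identity_general
    {B : Type*} [Fintype B] [DecidableEq B]
    (H_B : Matrix B B ℂ) (hH : H_B.IsHermitian) {b : ℝ} (hb : 0 < b)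
    (σ : Matrix B B ℂ) (hσ : IsDensityMatrix σ) :
    (Matrix.trace ((σ - gibbs H_B b) * H_B)).re =
      b⁻¹ * (relEntropy σ (gibbs H_B b) + vnEntropy σ - vnEntropy (gibbs H_B b)) := by
  have : Nonempty B := Matrix.nonempty_of_trace_ne_zero (hσ.2 ▸ one_ne_zero)
  rw [relEntropy_eq_neg_vnEntropy_sub, vnEntropy_eq_neg_re_trace_mul_log (gibbs H_B b),
    re_trace_mul_log_gibbs hH b hσ.2, re_trace_mul_log_gibbs hH b (trace_gibbs hH b),
    sub_mul, Matrix.trace_sub, Complex.sub_re]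
  field_simp
  ring

/-- Identity for deviations from canonical equilibrium. -/
theorem deviation_from_equilibrium_identity
    {B : Type*} [Fintype B] [DecidableEq B] [Nonempty B]
    (H_B : Matrix B B ℂ) (hH : H_B.IsHermitian) {b : ℝ} (hb : 0 < b)
    (σ : Matrix B B ℂ) (hσ : IsDensityMatrix σ) :
    (Matrix.trace ((σ - gibbs H_B b) * H_B)).re =
      b⁻¹ * (relEntropy σ (gibbs H_B b) + vnEntropy σ - vnEntropy (gibbs H_B b)) :=
  deviation_from_equilibrium_identity_general H_B hH hb σ hσ
end

section
/- Gibbs variational principle (Legendre transform of the von Neumann entropy): let ι be a finite nonempty type, G : Matrix ι ι ℂ Hermitian, and define J(G) = -Real.log ((Matrix.trace (exp (-G))).re). Then for every density matrix ρ on ι, J(G) + S(ρ) ≤ (Matrix.trace (ρ * G)).re, and equality holds if and only if ρ = (tr (exp (-G)))⁻¹ • exp (-G). -/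
open Matrix Kronecker
open scoped ComplexOrder

/-!
Diagonalize `ρ = U diag(p) U*` and `G = V diag(λ) V*`. The moduli squared `|W i j|²` of the
unitary `W = U* V` form a doubly stochastic matrix, and `Tr(ρ G) = ∑ |W i j|² p i λ j`. Writing
`q j = exp(-λ j) / Z`, the gap `Tr(ρ G) + log Z - S(ρ)` becomes
`∑ |W i j|² (p i log p i - p i log q j - p i + q j)`, a sum of terms that are nonnegative by
`log x ≤ x - 1`. A term vanishes iff `p i = q j` or `W i j = 0`, i.e. iff `diag(p) W = W diag(q)`,
which says precisely that `ρ = V diag(q) V*` is the Gibbs state.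
-/

open InformationTheory

namespace Real

lemma mul_klFun_div {p q : ℝ} (hq : q ≠ 0) :
    q * klFun (p / q) = p * log p - p * log q - (p - q) := by
  rcases eq_or_ne p 0 with rfl | hp
  · simp [klFun_zero]
  · rw [klFun_apply, log_div hp hq]
    field_simp
    ring

lemma sub_le_mul_log_sub_mul_log {p q : ℝ} (hp : 0 ≤ p) (hq : 0 < q) :
    p - q ≤ p * log p - p * log q := by
  have h := mul_nonneg hq.le (klFun_nonneg (div_nonneg hp hq.le))
  rw [mul_klFun_div hq.ne'] at h
  linarith

lemma sub_eq_mul_log_sub_mul_log_iff {p q : ℝ} (hp : 0 ≤ p) (hq : 0 < q) :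
    p - q = p * log p - p * log q ↔ p = q := by
  rw [eq_comm, ← sub_eq_zero, ← mul_klFun_div hq.ne', mul_eq_zero,
    klFun_eq_zero_iff (div_nonneg hp hq.le), div_eq_one_iff_eq hq.ne', or_iff_right hq.ne']

end Real

namespace Matrix

variable {ι : Type*} [Fintype ι] [DecidableEq ι]

lemma map_normSq_mem_doublyStochastic {W : Matrix ι ι ℂ}
    (hW : W ∈ unitary (Matrix ι ι ℂ)) :
    W.map Complex.normSq ∈ doublyStochastic ℝ ι := by
  refine mem_doublyStochastic_iff_sum.2
    ⟨fun i j => Complex.normSq_nonneg _, fun i => ?_, fun j => ?_⟩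
  · have h : (W * star W) i i = 1 := by rw [Unitary.mul_star_self_of_mem hW, one_apply_eq]
    simp only [mul_apply, star_apply, RCLike.star_def, Complex.mul_conj] at h
    simpa only [map_apply] using (by exact_mod_cast h : ∑ j, Complex.normSq (W i j) = 1)
  · have h : (star W * W) j j = 1 := by rw [Unitary.star_mul_self_of_mem hW, one_apply_eq]
    simp only [mul_apply, star_apply, RCLike.star_def, mul_comm (starRingEnd ℂ _),
      Complex.mul_conj] at h
    simpa only [map_apply] using (by exact_mod_cast h : ∑ i, Complex.normSq (W i j) = 1)

end Matrix

section DoublyStochastic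

variable {R ι : Type*} [Semiring R] [PartialOrder R] [IsOrderedRing R]
  [Fintype ι] [DecidableEq ι] {M : Matrix ι ι R}

lemma sum_sum_mul_left_of_mem_doublyStochastic (hM : M ∈ doublyStochastic R ι) (f : ι → R) :
    ∑ i, ∑ j, M i j * f i = ∑ i, f i := by
  simp only [← Finset.sum_mul, sum_row_of_mem_doublyStochastic hM, one_mul]

lemma sum_sum_mul_right_of_mem_doublyStochastic (hM : M ∈ doublyStochastic R ι) (g : ι → R) :
    ∑ i, ∑ j, M i j * g j = ∑ j, g j := by
  rw [Finset.sum_comm]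
  simp only [← Finset.sum_mul, sum_col_of_mem_doublyStochastic hM, one_mul]

end DoublyStochastic

section Klein

open Real

variable {ι : Type*} [Fintype ι] [DecidableEq ι] {M : Matrix ι ι ℝ}

lemma sum_sub_sum_le_sum_mul_log_of_mem_doublyStochastic (hM : M ∈ doublyStochastic ℝ ι)
    {p q : ι → ℝ} (hp : ∀ i, 0 ≤ p i) (hq : ∀ j, 0 < q j) :
    ∑ i, p i - ∑ j, q j ≤ ∑ i, ∑ j, M i j * (p i * log (p i) - p i * log (q j)) ∧
    (∑ i, p i - ∑ j, q j = ∑ i, ∑ j, M i j * (p i * log (p i) - p i * log (q j)) ↔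
      ∀ i j, p i = q j ∨ M i j = 0) := by
  have hterm : ∀ x : ι × ι, M x.1 x.2 * (p x.1 - q x.2) ≤
      M x.1 x.2 * (p x.1 * log (p x.1) - p x.1 * log (q x.2)) := fun x =>
    mul_le_mul_of_nonneg_left (sub_le_mul_log_sub_mul_log (hp _) (hq _))
      (nonneg_of_mem_doublyStochastic hM)
  have hsplit : ∑ i, p i - ∑ j, q j = ∑ i, ∑ j, M i j * (p i - q j) := by
    simp only [mul_sub, Finset.sum_sub_distrib, sum_sum_mul_left_of_mem_doublyStochastic hM,
      sum_sum_mul_right_of_mem_doublyStochastic hM]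
  rw [hsplit, ← Fintype.sum_prod_type', ← Fintype.sum_prod_type']
  refine ⟨Finset.sum_le_sum fun x _ => hterm x, ?_⟩
  rw [Finset.sum_eq_sum_iff_of_le fun x _ => hterm x]
  simp only [Finset.mem_univ, true_imp_iff, Prod.forall, mul_eq_mul_left_iff,
    sub_eq_mul_log_sub_mul_log_iff (hp _) (hq _)]

theorem neg_log_sum_exp_add_entropy_le_of_mem_doublyStochastic [Nonempty ι]
    (hM : M ∈ doublyStochastic ℝ ι) {p : ι → ℝ} (hp : ∀ i, 0 ≤ p i) (hp_sum : ∑ i, p i = 1)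
    (E : ι → ℝ) :
    -log (∑ j, exp (-E j)) + -∑ i, p i * log (p i) ≤ ∑ i, ∑ j, M i j * (p i * E j) ∧
    (-log (∑ j, exp (-E j)) + -∑ i, p i * log (p i) = ∑ i, ∑ j, M i j * (p i * E j) ↔
      ∀ i j, p i = exp (-E j) / ∑ k, exp (-E k) ∨ M i j = 0) := by
  set Z := ∑ j, exp (-E j)
  have hZ : 0 < Z := Finset.sum_pos (fun j _ => exp_pos _) Finset.univ_nonempty
  have hq : ∀ j, 0 < exp (-E j) / Z := fun j => div_pos (exp_pos _) hZ
  have hq_sum : ∑ j, exp (-E j) / Z = 1 := by rw [← Finset.sum_div, div_self hZ.ne']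
  have hgap : ∑ i, ∑ j, M i j * (p i * log (p i) - p i * log (exp (-E j) / Z)) =
      ∑ i, ∑ j, M i j * (p i * E j) - (-log Z + -∑ i, p i * log (p i)) := by
    have hterm : ∀ i j, M i j * (p i * log (p i) - p i * log (exp (-E j) / Z)) =
        M i j * (p i * log (p i) + p i * log Z) + M i j * (p i * E j) := fun i j => by
      rw [log_div (exp_pos _).ne' hZ.ne', log_exp]
      ring
    simp only [hterm, Finset.sum_add_distrib]
    rw [sum_sum_mul_left_of_mem_doublyStochastic hM, Finset.sum_add_distrib, ← Finset.sum_mul,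
      hp_sum]
    ring
  obtain ⟨hle, heq⟩ := sum_sub_sum_le_sum_mul_log_of_mem_doublyStochastic hM hp hq
  rw [hp_sum, hq_sum, sub_self, hgap] at hle heq
  exact ⟨by linarith, by rw [← heq]; constructor <;> intro h <;> linarith⟩

end Klein

namespace Matrix

variable {ι : Type*} [Fintype ι] [DecidableEq ι]

lemma conj_diagonal_eq_conj_diagonal_iff {U V : Matrix ι ι ℂ}
    (hU : U ∈ unitary (Matrix ι ι ℂ)) (hV : V ∈ unitary (Matrix ι ι ℂ)) (a b : ι → ℂ) :
    U * diagonal a * star U = V * diagonal b * star V ↔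
      ∀ i j, a i = b j ∨ (star U * V) i j = 0 := by
  have hconj : U * diagonal a * star U = V * diagonal b * star V ↔
      diagonal a * (star U * V) = star U * V * diagonal b := by
    constructor
    · intro h
      have h' := congrArg (fun X => star U * X * V) h
      simp only [← mul_assoc, Unitary.star_mul_self_of_mem hU, one_mul] at h'
      simpa only [mul_assoc, Unitary.star_mul_self_of_mem hV, mul_one] using h'
    · intro h
      have h' := congrArg (fun X => U * X * star V) h
      simp only [mul_assoc, Unitary.mul_star_self_of_mem hV, mul_one] at h'
      simpa only [← mul_assoc, Unitary.mul_star_self_of_mem hU, one_mul] using h'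
  rw [hconj, ← ext_iff]
  simp only [diagonal_mul, mul_diagonal, mul_comm (a _), mul_eq_mul_left_iff]

lemma trace_conj_diagonal_mul_conj_diagonal (U V : Matrix ι ι ℂ) (a b : ι → ℂ) :
    (U * diagonal a * star U * (V * diagonal b * star V)).trace =
      ∑ i, ∑ j, (Complex.normSq ((star U * V) i j) : ℂ) * (a i * b j) := by
  have hcycle : (U * diagonal a * star U * (V * diagonal b * star V)).trace =
      (diagonal a * (star U * V) * diagonal b * star (star U * V)).trace := by
    rw [star_mul, star_star]
    simp only [mul_assoc]
    rw [trace_mul_comm U]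
    simp only [mul_assoc]
  rw [hcycle]
  refine Finset.sum_congr rfl fun i _ => ?_
  rw [diag_apply, mul_apply]
  refine Finset.sum_congr rfl fun j _ => ?_
  rw [mul_diagonal, diagonal_mul, star_apply, RCLike.star_def, ← Complex.mul_conj]
  ring

lemma mexp_conj_diagonal {U : Matrix ι ι ℂ} (hU : U ∈ unitary (Matrix ι ι ℂ))
    (a : ι → ℂ) :
    mexp (U * diagonal a * star U) = U * diagonal (fun i => Complex.exp (a i)) * star U := by
  have hinv : U⁻¹ = star U := inv_eq_left_inv (Unitary.star_mul_self_of_mem hU)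
  rw [mexp, ← hinv, exp_conj _ _ (Unitary.isUnit_coe (U := ⟨U, hU⟩)), exp_diagonal,
    Pi.exp_def]
  simp only [Complex.exp_eq_exp_ℂ]

end Matrix

namespace Matrix.IsHermitian

variable {ι : Type*} [Fintype ι] [DecidableEq ι] {A : Matrix ι ι ℂ}

lemma eq_conj_diagonal (hA : A.IsHermitian) :
    A = (hA.eigenvectorUnitary : Matrix ι ι ℂ) * diagonal (fun i => (hA.eigenvalues i : ℂ)) *
      star (hA.eigenvectorUnitary : Matrix ι ι ℂ) :=
  hA.spectral_theorem

lemma eq_conj_diagonal_iff (hA : A.IsHermitian) {V : Matrix ι ι ℂ}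
    (hV : V ∈ unitary (Matrix ι ι ℂ)) (b : ι → ℂ) :
    A = V * diagonal b * star V ↔ ∀ i j, (hA.eigenvalues i : ℂ) = b j ∨
      (star (hA.eigenvectorUnitary : Matrix ι ι ℂ) * V) i j = 0 := by
  conv_lhs => rw [hA.eq_conj_diagonal]
  exact conj_diagonal_eq_conj_diagonal_iff hA.eigenvectorUnitary.2 hV _ _

lemma re_trace_mul (hA : A.IsHermitian) {B : Matrix ι ι ℂ} (hB : B.IsHermitian) :
    (A * B).trace.re = ∑ i, ∑ j, (star (hA.eigenvectorUnitary : Matrix ι ι ℂ) *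
      hB.eigenvectorUnitary).map Complex.normSq i j * (hA.eigenvalues i * hB.eigenvalues j) := by
  conv_lhs => rw [hA.eq_conj_diagonal, hB.eq_conj_diagonal]
  rw [trace_conj_diagonal_mul_conj_diagonal]
  simp only [Complex.re_sum, ← Complex.ofReal_mul, Complex.ofReal_re, map_apply]

lemma mexp_neg (hA : A.IsHermitian) :
    mexp (-A) = (hA.eigenvectorUnitary : Matrix ι ι ℂ) *
      diagonal (fun i => (Real.exp (-hA.eigenvalues i) : ℂ)) *
      star (hA.eigenvectorUnitary : Matrix ι ι ℂ) := by
  conv_lhs => rw [hA.eq_conj_diagonal]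
  rw [← neg_mul, ← mul_neg, diagonal_neg, mexp_conj_diagonal hA.eigenvectorUnitary.2]
  simp only [Complex.ofReal_exp, Complex.ofReal_neg]

lemma trace_mexp_neg (hA : A.IsHermitian) :
    (mexp (-A)).trace = ((∑ i, Real.exp (-hA.eigenvalues i) : ℝ) : ℂ) := by
  rw [hA.mexp_neg, trace_mul_cycle, Unitary.star_mul_self_of_mem hA.eigenvectorUnitary.2,
    one_mul, trace_diagonal, Complex.ofReal_sum]

lemma inv_trace_mexp_neg_smul (hA : A.IsHermitian) :
    (mexp (-A)).trace⁻¹ • mexp (-A) = (hA.eigenvectorUnitary : Matrix ι ι ℂ) *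
      diagonal (fun i =>
        ((Real.exp (-hA.eigenvalues i) / ∑ k, Real.exp (-hA.eigenvalues k) : ℝ) : ℂ)) *
      star (hA.eigenvectorUnitary : Matrix ι ι ℂ) := by
  rw [hA.trace_mexp_neg, hA.mexp_neg, ← Matrix.smul_mul, ← Matrix.mul_smul, ← diagonal_smul]
  congr 3
  ext i
  simp only [Pi.smul_apply, smul_eq_mul, Complex.ofReal_div]
  ring

end Matrix.IsHermitian

/-- Gibbs variational principle (Legendre transform of the von Neumann entropy). -/
theorem gibbs_variational_principle
    {ι : Type*} [Fintype ι] [DecidableEq ι] [Nonempty ι]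
    (G : Matrix ι ι ℂ) (hG : G.IsHermitian)
    (ρ : Matrix ι ι ℂ) (hρ : IsDensityMatrix ρ) :
    -Real.log ((Matrix.trace (mexp (-G))).re) + vnEntropy ρ ≤ (Matrix.trace (ρ * G)).re ∧
    (-Real.log ((Matrix.trace (mexp (-G))).re) + vnEntropy ρ = (Matrix.trace (ρ * G)).re ↔
      ρ = (Matrix.trace (mexp (-G)))⁻¹ • mexp (-G)) := by
  obtain ⟨hρ_psd, hρ_trace⟩ := hρ
  have hρH := hρ_psd.isHermitian
  have hp_sum : ∑ i, hρH.eigenvalues i = 1 := by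
    have h : ((∑ i, hρH.eigenvalues i : ℝ) : ℂ) = 1 := by
      rw [Complex.ofReal_sum]
      exact hρH.trace_eq_sum_eigenvalues.symm.trans hρ_trace
    exact_mod_cast h
  have hM := map_normSq_mem_doublyStochastic
    (mul_mem (Unitary.star_mem hρH.eigenvectorUnitary.2) hG.eigenvectorUnitary.2)
  have key := neg_log_sum_exp_add_entropy_le_of_mem_doublyStochastic hM
    hρ_psd.eigenvalues_nonneg hp_sum hG.eigenvalues
  rw [hG.inv_trace_mexp_neg_smul, hρH.eq_conj_diagonal_iff hG.eigenvectorUnitary.2,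
    hG.trace_mexp_neg, Complex.ofReal_re, vnEntropy, dif_pos hρH, hρH.re_trace_mul hG]
  simpa only [Complex.ofReal_inj, map_apply, map_eq_zero] using key
end

section
/- Equivalence of the two quantum forms of Landauer's erasure principle (Theorem 3, (ii) ⇔ (iii)): let A be a finite nonempty type, Q : Matrix A A ℂ Hermitian, and b > 0. Then (Matrix.trace (exp (-b • Q))).re < 1 if and only if for every density matrix ρ on A, (Matrix.trace (ρ * Q)).re > b⁻¹ * S(ρ). -/
open Matrix Kronecker
open scoped ComplexOrder

/-! `b * tr (ρ Q) - S(ρ)` is `b` times the free energy of the state `ρ`. In eigenbases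
`ρ = U diag(p) U*` and `Q = W diag(q) W*`, the overlap matrix `|(U* W)ᵢⱼ|²` is doubly stochastic,
so Jensen's inequality for `exp`, combined with Gibbs' inequality `p (log p + y) ≥ p - exp (-y)`,
bounds the free energy below by `1 - Z` with `Z = tr exp (-b Q)`, while the Gibbs state attains
`-log Z`. Hence the free energy is positive on every state exactly when `Z < 1`. -/

open Unitary

section

variable {n : Type*} [Fintype n] [DecidableEq n]

theorem Matrix.trace_conjStarAlgAut {R : Type*} [CommRing R] [StarRing R]
    (u : unitaryGroup n R) (X : Matrix n n R) :
    (conjStarAlgAut R _ u X).trace = X.trace := by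
  rw [conjStarAlgAut_apply, trace_mul_cycle, coe_star_mul_self, one_mul]

theorem mexp_conjStarAlgAut (u : unitaryGroup n ℂ) (X : Matrix n n ℂ) :
    mexp (conjStarAlgAut ℂ _ u X) = conjStarAlgAut ℂ _ u (mexp X) := by
  have hinv : (u : Matrix n n ℂ)⁻¹ = star (u : Matrix n n ℂ) :=
    inv_eq_right_inv (coe_mul_star_self u)
  simp only [mexp, conjStarAlgAut_apply, ← hinv]
  exact Matrix.exp_conj _ _ (Unitary.toUnits u).isUnit

theorem mexp_diagonal (d : n → ℂ) : mexp (diagonal d) = diagonal fun i => Complex.exp (d i) := by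
  rw [mexp, Matrix.exp_diagonal]
  congr 1
  ext i
  rw [Pi.exp_def, Complex.exp_eq_exp_ℂ]

namespace Matrix.IsHermitian

theorem mexp_smul {Q : Matrix n n ℂ} (hQ : Q.IsHermitian) (t : ℝ) :
    mexp (t • Q) = conjStarAlgAut ℂ _ hQ.eigenvectorUnitary
      (diagonal fun i => ((Real.exp (t * hQ.eigenvalues i) : ℝ) : ℂ)) := by
  have hsmul : t • Q = conjStarAlgAut ℂ _ hQ.eigenvectorUnitary
      (diagonal fun i => ((t * hQ.eigenvalues i : ℝ) : ℂ)) := by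
    conv_lhs => rw [hQ.spectral_theorem]
    rw [conjStarAlgAut_apply, conjStarAlgAut_apply, ← Matrix.smul_mul, ← Matrix.mul_smul,
      ← diagonal_smul]
    congr 3
    ext i
    simp
  rw [hsmul, mexp_conjStarAlgAut, mexp_diagonal]
  simp

theorem re_trace_mexp_smul {Q : Matrix n n ℂ} (hQ : Q.IsHermitian) (t : ℝ) :
    (mexp (t • Q)).trace.re = ∑ i, Real.exp (t * hQ.eigenvalues i) := by
  rw [hQ.mexp_smul, trace_conjStarAlgAut, trace_diagonal, ← Complex.ofReal_sum,
    Complex.ofReal_re]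

theorem sum_eigenvalues_comp_eq {M : Matrix n n ℂ} (hM : M.IsHermitian) (u : unitaryGroup n ℂ)
    (d : n → ℝ) (hMd : M = conjStarAlgAut ℂ _ u (diagonal fun i => (d i : ℂ))) (f : ℝ → ℝ) :
    ∑ i, f (hM.eigenvalues i) = ∑ i, f (d i) := by
  have hcharpoly : M.charpoly = ∏ i, (Polynomial.X - Polynomial.C (d i : ℂ)) := by
    rw [hMd, conjStarAlgAut_apply, charpoly_mul_comm, ← mul_assoc, coe_star_mul_self, one_mul,
      charpoly_diagonal]
  have hroots : Multiset.map (RCLike.ofReal ∘ hM.eigenvalues) Finset.univ.val =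
      Multiset.map (fun i => (d i : ℂ)) Finset.univ.val := by
    rw [← hM.roots_charpoly_eq_eigenvalues, hcharpoly, Polynomial.roots_prod]
    · simp
    · simp [Finset.prod_ne_zero_iff, Polynomial.X_sub_C_ne_zero]
  have := congrArg (fun s => (s.map fun z : ℂ => f z.re).sum) hroots
  simpa [Multiset.map_map, Function.comp_def] using this

end Matrix.IsHermitian

theorem Matrix.re_trace_diagonal_mul_mul_diagonal_mul_star (V : Matrix n n ℂ) (p q : n → ℝ) :
    (trace (diagonal (fun i => (p i : ℂ)) * V * diagonal (fun i => (q i : ℂ)) * star V)).re =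
      ∑ i, p i * ((of fun i j => Complex.normSq (V i j)) *ᵥ q) i := by
  simp only [trace, diag_apply, mul_apply (M := diagonal _ * V * diagonal _), mul_diagonal,
    diagonal_mul, star_apply, Complex.re_sum, mulVec, dotProduct, of_apply, Finset.mul_sum]
  refine Finset.sum_congr rfl fun i _ => Finset.sum_congr rfl fun j _ => ?_
  rw [mul_right_comm _ (q j : ℂ), mul_assoc (p i : ℂ), Complex.star_def, Complex.mul_conj]
  norm_cast
  ring

theorem Matrix.re_trace_conjStarAlgAut_diagonal_mul (u w : unitaryGroup n ℂ) (p q : n → ℝ) :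
    (trace (conjStarAlgAut ℂ _ u (diagonal fun i => (p i : ℂ)) *
      conjStarAlgAut ℂ _ w (diagonal fun i => (q i : ℂ)))).re =
      ∑ i, p i * ((of fun i j => Complex.normSq ((star u * w : unitaryGroup n ℂ) i j)) *ᵥ q) i := by
  set V : Matrix n n ℂ := ((star u * w : unitaryGroup n ℂ) : Matrix n n ℂ)
  have htrace : trace (conjStarAlgAut ℂ _ u (diagonal fun i => (p i : ℂ)) *
      conjStarAlgAut ℂ _ w (diagonal fun i => (q i : ℂ))) =
      trace (diagonal (fun i => (p i : ℂ)) * V * diagonal (fun i => (q i : ℂ)) * star V) := by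
    simp only [V, conjStarAlgAut_apply, Submonoid.coe_mul, star_mul, star_star, coe_star,
      Matrix.mul_assoc]
    rw [trace_mul_comm]
    simp only [Matrix.mul_assoc]
  rw [htrace, re_trace_diagonal_mul_mul_diagonal_mul_star]

theorem Matrix.normSq_mem_doublyStochastic (u : unitaryGroup n ℂ) :
    (of fun i j => Complex.normSq (u i j)) ∈ doublyStochastic ℝ n := by
  have hsum (v : unitaryGroup n ℂ) (i : n) : ∑ j, Complex.normSq (v i j) = 1 := by
    have := congrFun (congrFun (coe_mul_star_self v) i) i
    simp only [mul_apply, coe_star, star_apply, Complex.star_def, Complex.mul_conj,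
      one_apply_eq] at this
    exact_mod_cast this
  refine mem_doublyStochastic_iff_sum.2 ⟨fun i j => Complex.normSq_nonneg _, hsum u, fun j => ?_⟩
  simpa [star_apply] using hsum (star u) j

theorem ConvexOn.sum_comp_mulVec_le_of_mem_doublyStochastic {s : Set ℝ} {f : ℝ → ℝ}
    (hf : ConvexOn ℝ s f) {M : Matrix n n ℝ} (hM : M ∈ doublyStochastic ℝ n) {x : n → ℝ}
    (hx : ∀ i, x i ∈ s) : ∑ i, f ((M *ᵥ x) i) ≤ ∑ i, f (x i) :=
  calc ∑ i, f ((M *ᵥ x) i) ≤ ∑ i, ∑ j, M i j * f (x j) := by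
        gcongr with i
        exact hf.map_sum_le (fun j _ => nonneg_of_mem_doublyStochastic hM)
          (sum_row_of_mem_doublyStochastic hM i) fun j _ => hx j
    _ = ∑ i, f (x i) := by
        rw [Finset.sum_comm]
        simp_rw [← Finset.sum_mul, sum_col_of_mem_doublyStochastic hM, one_mul]

theorem Real.sub_exp_neg_le_mul_log_add {p : ℝ} (hp : 0 ≤ p) (y : ℝ) :
    p - Real.exp (-y) ≤ p * (Real.log p + y) := by
  rcases hp.eq_or_lt with rfl | hp
  · simp [(Real.exp_pos _).le]
  · have := Real.add_one_le_exp (-y - Real.log p)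
    rw [Real.exp_sub, Real.exp_log hp, le_div_iff₀ hp] at this
    linarith

noncomputable def betaFreeEnergy (Q ρ : Matrix n n ℂ) (b : ℝ) : ℝ :=
  b * (trace (ρ * Q)).re - vnEntropy ρ

theorem IsDensityMatrix.one_sub_re_trace_mexp_le_betaFreeEnergy {ρ Q : Matrix n n ℂ}
    (hρ : IsDensityMatrix ρ) (hQ : Q.IsHermitian) (b : ℝ) :
    1 - (mexp (-b • Q)).trace.re ≤ betaFreeEnergy Q ρ b := by
  obtain ⟨hρpsd, hρtr⟩ := hρ
  have hρH := hρpsd.isHermitian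
  set p := hρH.eigenvalues
  set q := hQ.eigenvalues
  set M := of fun i j =>
    Complex.normSq ((star hρH.eigenvectorUnitary * hQ.eigenvectorUnitary : unitaryGroup n ℂ) i j)
  have hM : M ∈ doublyStochastic ℝ n := normSq_mem_doublyStochastic _
  have hp : ∀ i, 0 ≤ p i := hρpsd.eigenvalues_nonneg
  have hp1 : ∑ i, p i = 1 := by
    simpa using congrArg Complex.re (hρH.trace_eq_sum_eigenvalues.symm.trans hρtr)
  have henergy : (trace (ρ * Q)).re = ∑ i, p i * (M *ᵥ q) i := by
    conv_lhs => rw [hρH.spectral_theorem, hQ.spectral_theorem]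
    exact re_trace_conjStarAlgAut_diagonal_mul _ _ _ _
  have hentropy : vnEntropy ρ = -∑ i, p i * Real.log (p i) := by
    rw [vnEntropy, dif_pos hρH]
  have hjensen : ∑ i, Real.exp (-b * (M *ᵥ q) i) ≤ ∑ i, Real.exp (-b * q i) := by
    have := convexOn_exp.sum_comp_mulVec_le_of_mem_doublyStochastic hM (x := -b • q)
      fun _ => Set.mem_univ _
    rw [mulVec_smul] at this
    simpa using this
  rw [hQ.re_trace_mexp_smul, betaFreeEnergy, henergy, hentropy]
  calc 1 - ∑ i, Real.exp (-b * q i)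
      ≤ ∑ i, (p i - Real.exp (-(b * (M *ᵥ q) i))) := by
        simp only [Finset.sum_sub_distrib, hp1, neg_mul] at hjensen ⊢
        linarith
    _ ≤ ∑ i, p i * (Real.log (p i) + b * (M *ᵥ q) i) :=
        Finset.sum_le_sum fun i _ => Real.sub_exp_neg_le_mul_log_add (hp i) _
    _ = b * ∑ i, p i * (M *ᵥ q) i - -∑ i, p i * Real.log (p i) := by
        rw [Finset.mul_sum, sub_neg_eq_add, ← Finset.sum_add_distrib]
        exact Finset.sum_congr rfl fun i _ => by ring

namespace Matrix.IsHermitian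

theorem gibbs_eq {Q : Matrix n n ℂ} (hQ : Q.IsHermitian) (b : ℝ) :
    gibbs Q b = conjStarAlgAut ℂ _ hQ.eigenvectorUnitary (diagonal fun i =>
      ((Real.exp (-b * hQ.eigenvalues i) / ∑ j, Real.exp (-b * hQ.eigenvalues j) : ℝ) : ℂ)) := by
  have htrace : (mexp (-b • Q)).trace = ((∑ j, Real.exp (-b * hQ.eigenvalues j) : ℝ) : ℂ) := by
    rw [hQ.mexp_smul, trace_conjStarAlgAut, trace_diagonal, Complex.ofReal_sum]
  rw [gibbs, htrace, hQ.mexp_smul, ← map_smul, ← diagonal_smul]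
  congr 2
  ext i
  simp [div_eq_inv_mul]

theorem isDensityMatrix_gibbs [Nonempty n] {Q : Matrix n n ℂ} (hQ : Q.IsHermitian) (b : ℝ) :
    IsDensityMatrix (gibbs Q b) := by
  have hZ : 0 < ∑ j, Real.exp (-b * hQ.eigenvalues j) :=
    Finset.sum_pos (fun j _ => Real.exp_pos _) Finset.univ_nonempty
  rw [hQ.gibbs_eq]
  refine ⟨?_, ?_⟩
  · rw [conjStarAlgAut_apply, star_eq_conjTranspose]
    exact PosSemidef.mul_mul_conjTranspose_same
      (PosSemidef.diagonal fun i => Complex.zero_le_real.2 (by positivity)) _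
  · rw [trace_conjStarAlgAut, trace_diagonal, ← Complex.ofReal_sum, ← Finset.sum_div,
      div_self hZ.ne', Complex.ofReal_one]

theorem betaFreeEnergy_gibbs [Nonempty n] {Q : Matrix n n ℂ} (hQ : Q.IsHermitian) (b : ℝ) :
    betaFreeEnergy Q (gibbs Q b) b = -Real.log (mexp (-b • Q)).trace.re := by
  set q := hQ.eigenvalues
  set Z := ∑ j, Real.exp (-b * q j)
  set g := fun i => Real.exp (-b * q i) / Z
  have hZ : 0 < Z := Finset.sum_pos (fun j _ => Real.exp_pos _) Finset.univ_nonempty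
  have hg1 : ∑ i, g i = 1 := by rw [← Finset.sum_div, div_self hZ.ne']
  have hlog (i : n) : Real.log (g i) = -b * q i - Real.log Z := by
    rw [Real.log_div (Real.exp_pos _).ne' hZ.ne', Real.log_exp]
  have hG := hQ.gibbs_eq b
  have henergy : (trace (gibbs Q b * Q)).re = ∑ i, g i * q i := by
    have hmul : gibbs Q b * Q = conjStarAlgAut ℂ _ hQ.eigenvectorUnitary
        (diagonal fun i => (g i : ℂ)) *
        conjStarAlgAut ℂ _ hQ.eigenvectorUnitary (diagonal (RCLike.ofReal ∘ q)) := by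
      rw [← hQ.spectral_theorem, hG]
    rw [hmul, ← map_mul, diagonal_mul_diagonal, trace_conjStarAlgAut, trace_diagonal,
      Complex.re_sum]
    simp
  have hentropy : vnEntropy (gibbs Q b) = -∑ i, g i * Real.log (g i) := by
    have hH := (hQ.isDensityMatrix_gibbs b).1.isHermitian
    rw [vnEntropy, dif_pos hH, hH.sum_eigenvalues_comp_eq _ g hG fun x => x * Real.log x]
  rw [betaFreeEnergy, henergy, hentropy, hQ.re_trace_mexp_smul, sub_neg_eq_add, Finset.mul_sum,
    ← Finset.sum_add_distrib]
  calc ∑ i, (b * (g i * q i) + g i * Real.log (g i)) = ∑ i, g i * -Real.log Z :=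
        Finset.sum_congr rfl fun i _ => by rw [hlog]; ring
    _ = -Real.log Z := by rw [← Finset.sum_mul, hg1, one_mul]

end Matrix.IsHermitian

end

/-- Equivalence of the two quantum forms of Landauer's erasure principle. -/
theorem landauer_two_forms_equivalence
    {A : Type*} [Fintype A] [DecidableEq A] [Nonempty A]
    (Q : Matrix A A ℂ) (hQ : Q.IsHermitian) {b : ℝ} (hb : 0 < b) :
    (Matrix.trace (mexp (-b • Q))).re < 1 ↔
      ∀ ρ : Matrix A A ℂ, IsDensityMatrix ρ →
        (Matrix.trace (ρ * Q)).re > b⁻¹ * vnEntropy ρ := by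
  have hfree (ρ : Matrix A A ℂ) : (Matrix.trace (ρ * Q)).re > b⁻¹ * vnEntropy ρ ↔
      0 < betaFreeEnergy Q ρ b := by
    rw [gt_iff_lt, inv_mul_lt_iff₀ hb, betaFreeEnergy, sub_pos]
  simp only [hfree]
  constructor
  · intro hZ ρ hρ
    linarith [hρ.one_sub_re_trace_mexp_le_betaFreeEnergy hQ b]
  · intro h
    have hlog := hQ.betaFreeEnergy_gibbs b ▸ h _ (hQ.isDensityMatrix_gibbs b)
    by_contra! hZ
    linarith [Real.log_nonneg hZ]
end

section
/- Equivalence of Szilard's inequality and the coding-dependent Landauer bound (classical case): let n ≥ 1, q : Fin n → ℝ, and b > 0. Then ∑ i, Real.exp (-(b * q i)) ≤ 1 if and only if for every p : Fin n → ℝ with p i ≥ 0 for all i and ∑ i, p i = 1, one has ∑ i, p i * q i ≥ b⁻¹ * (-∑ i, p i * Real.log (p i)). -/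
lemma szilard_key (p a : ℝ) (hp : 0 ≤ p) (ha : 0 < a) :
    p - a ≤ p * Real.log p - p * Real.log a := by
  rcases hp.eq_or_lt with h | h
  · simp [← h]; linarith
  · have hlog : Real.log (a / p) ≤ a / p - 1 :=
      Real.log_le_sub_one_of_pos (div_pos ha h)
    rw [Real.log_div ha.ne' h.ne'] at hlog
    have := mul_le_mul_of_nonneg_left hlog h.le
    have hap : p * (a / p) = a := by field_simp
    nlinarith

/-- Equivalence of Szilard's inequality and the coding-dependent
Landauer bound (classical case). -/
theorem szilard_landauer_equivalence
    (n : ℕ) (hn : 1 ≤ n) (q : Fin n → ℝ) {b : ℝ} (hb : 0 < b) :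
    (∑ i, Real.exp (-(b * q i)) ≤ 1) ↔
      ∀ p : Fin n → ℝ, (∀ i, p i ≥ 0) → (∑ i, p i = 1) →
        ∑ i, p i * q i ≥ b⁻¹ * (-∑ i, p i * Real.log (p i)) := by
  constructor
  · intro hZ p hp hsum
    rw [ge_iff_le, inv_mul_le_iff₀ hb]
    have key : ∀ i, p i - Real.exp (-(b * q i)) ≤
        p i * Real.log (p i) + b * (p i * q i) := by
      intro i
      have := szilard_key (p i) (Real.exp (-(b * q i))) (hp i) (Real.exp_pos _)
      rw [Real.log_exp] at this
      nlinarith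
    have hsum2 : ∑ i, (p i - Real.exp (-(b * q i))) ≤
        ∑ i, (p i * Real.log (p i) + b * (p i * q i)) :=
      Finset.sum_le_sum (fun i _ => key i)
    rw [Finset.sum_add_distrib, ← Finset.mul_sum, Finset.sum_sub_distrib, hsum] at hsum2
    linarith
  · intro h
    have hne : (Finset.univ : Finset (Fin n)).Nonempty := by
      haveI : Nonempty (Fin n) := ⟨⟨0, hn⟩⟩
      exact Finset.univ_nonempty
    set Z := ∑ i, Real.exp (-(b * q i)) with hZdef
    have hZpos : 0 < Z :=
      Finset.sum_pos (fun i _ => Real.exp_pos _) hne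
    set p : Fin n → ℝ := fun i => Real.exp (-(b * q i)) / Z with hpdef
    have hp : ∀ i, p i ≥ 0 := fun i => div_nonneg (Real.exp_pos _).le hZpos.le
    have hsum : ∑ i, p i = 1 := by
      simp only [hpdef, div_eq_mul_inv, ← Finset.sum_mul]
      rw [← hZdef, mul_inv_cancel₀ hZpos.ne']
    have hspec := h p hp hsum
    have hlogp : ∀ i, p i * Real.log (p i) = p i * (-(b * q i)) - p i * Real.log Z := by
      intro i
      rw [hpdef]
      rw [Real.log_div (Real.exp_pos _).ne' hZpos.ne', Real.log_exp]
      ring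
    have hsum3 : ∑ i, p i * Real.log (p i) = -(b * ∑ i, p i * q i) - Real.log Z := by
      rw [Finset.sum_congr rfl (fun i _ => hlogp i), Finset.sum_sub_distrib,
        ← Finset.sum_mul, hsum, one_mul]
      have e : ∑ x, p x * -(b * q x) = -(b * ∑ i, p i * q i) := by
        rw [Finset.mul_sum, ← Finset.sum_neg_distrib]
        exact Finset.sum_congr rfl fun i _ => by ring
      rw [e]
    rw [hsum3] at hspec
    have hlogZ : Real.log Z ≤ 0 := by
      rw [ge_iff_le, inv_mul_le_iff₀ hb] at hspec
      nlinarith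
    calc Z = Real.exp (Real.log Z) := (Real.exp_log hZpos).symm
    _ ≤ Real.exp 0 := Real.exp_le_exp.mpr hlogZ
    _ = 1 := Real.exp_zero
end

section
/- Sufficiency in the characterization of HTOs of complete erasures, equality case (Theorem 2, case (ii)): let A be a finite nonempty type, b > 0, Q : Matrix A A ℂ Hermitian, and ρ0 a positive definite density matrix on A. Suppose -Real.log ((Matrix.trace (exp (-b • Q))).re) = -S(ρ0) and the density matrix σ = (tr (exp (-b • Q)))⁻¹ • exp (-b • Q) has the same characteristic polynomial as ρ0. Then there exist a Hermitian matrix H_B : Matrix A A ℂ (the bath is a copy of A) and a matrix U : Matrix (A × A) (A × A) ℂ with Uᴴ * U = 1 such that, with ρ_B the Gibbs state of H_B at inverse temperature b: (a) for every density matrix ρ on A, tr_B (U * (ρ ⊗ₖ ρ_B) * Uᴴ) = ρ0; and (b) the heat transfer operator of this realization setup equals Q. -/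
/-!
Take the bath to be a copy of the device with Hamiltonian `Q`, so that it starts in the Gibbs
state `σ` of `Q`. Since `σ` and `ρ0` are Hermitian with the same characteristic polynomial, they
have the same eigenvalues, and a unitary `V` carries `σ` to `ρ0`. The unitary
`U = (V ⊗ 1) · SWAP` moves the bath state into the device and rotates it, so the device ends
in `V σ Vᴴ = ρ0` whatever its input. For this `U` the heat transfer operator is
`tr(σ) Q - E_B = Q - E_B`, and `E_B = 0`: the identity `S(σ) = log Z + b E_B` and the hypothesis
`log Z = S(ρ0) = S(σ)` force `b E_B = 0`.
-/

open Matrix Kronecker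
open scoped ComplexOrder

namespace Matrix

variable {𝕜 n : Type*} [RCLike 𝕜] [Fintype n] [DecidableEq n]

lemma continuousOn_spectrum (M : Matrix n n 𝕜) (f : ℝ → ℝ) : ContinuousOn f (spectrum ℝ M) :=
  (spectrum ℝ M).toFinite.continuousOn f

namespace IsHermitian

lemma trace_cfc_s9 {Q : Matrix n n 𝕜} (hQ : Q.IsHermitian) (f : ℝ → ℝ) :
    (cfc f Q).trace = ((∑ i, f (hQ.eigenvalues i) : ℝ) : 𝕜) := by
  rw [hQ.cfc_eq, IsHermitian.cfc, Unitary.conjStarAlgAut_apply, trace_mul_cycle,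
    Unitary.coe_star_mul_self, one_mul, trace_diagonal, RCLike.ofReal_sum]
  rfl

lemma exists_unitary_conj_eq_of_charpoly_eq {Q M : Matrix n n 𝕜} (hQ : Q.IsHermitian)
    (hM : M.IsHermitian) (h : Q.charpoly = M.charpoly) :
    ∃ V : Matrix n n 𝕜, Vᴴ * V = 1 ∧ V * Q * Vᴴ = M := by
  set V := hM.eigenvectorUnitary * star hQ.eigenvectorUnitary
  have hdiag := hQ.conjStarAlgAut_star_eigenvectorUnitary
  rw [(eigenvalues_eq_eigenvalues_iff hQ hM).2 h] at hdiag
  refine ⟨V, Unitary.coe_star_mul_self V, ?_⟩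
  calc (V : Matrix n n 𝕜) * Q * Vᴴ = Unitary.conjStarAlgAut 𝕜 _ V Q := rfl
    _ = M := by rw [Unitary.conjStarAlgAut_mul_apply, hdiag, ← hM.spectral_theorem]

variable {Q : Matrix n n ℂ}

lemma mexp_cfc (hQ : Q.IsHermitian) (f : ℝ → ℝ) :
    mexp (cfc f Q) = cfc (fun x => Real.exp (f x)) Q := by
  set U : Matrix n n ℂ := (hQ.eigenvectorUnitary : Matrix n n ℂ)
  have hUinv : U⁻¹ = star U := inv_eq_left_inv (Unitary.coe_star_mul_self _)
  have hU : IsUnit U := (Unitary.toUnits hQ.eigenvectorUnitary).isUnit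
  rw [hQ.cfc_eq, hQ.cfc_eq, IsHermitian.cfc, IsHermitian.cfc, Unitary.conjStarAlgAut_apply,
    Unitary.conjStarAlgAut_apply, mexp, ← hUinv, Matrix.exp_conj _ _ hU, Matrix.exp_diagonal]
  congr 3
  ext i
  simp [← Complex.exp_eq_exp_ℂ, Complex.ofReal_exp]

lemma vnEntropy_eq_neg_trace_cfc (hQ : Q.IsHermitian) :
    vnEntropy Q = -((cfc (fun x => x * Real.log x) Q).trace).re := by
  rw [vnEntropy, dif_pos hQ, hQ.trace_cfc_s9, ← RCLike.re_to_complex, RCLike.ofReal_re]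

lemma vnEntropy_eq_of_charpoly_eq {M : Matrix n n ℂ} (hQ : Q.IsHermitian) (hM : M.IsHermitian)
    (h : Q.charpoly = M.charpoly) : vnEntropy Q = vnEntropy M := by
  rw [vnEntropy, vnEntropy, dif_pos hQ, dif_pos hM, (eigenvalues_eq_eigenvalues_iff hQ hM).2 h]

noncomputable def gibbsWeight (hQ : Q.IsHermitian) (b x : ℝ) : ℝ :=
  (∑ i, Real.exp (-b * hQ.eigenvalues i))⁻¹ * Real.exp (-b * x)

lemma mexp_neg_smul (hQ : Q.IsHermitian) (b : ℝ) :
    mexp (-b • Q) = cfc (fun x => Real.exp (-b * x)) Q := by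
  rw [← hQ.mexp_cfc (fun x => -b * x), cfc_const_mul (-b) (fun x => x) Q, cfc_id' ℝ Q]

lemma trace_mexp_neg_smul (hQ : Q.IsHermitian) (b : ℝ) :
    (mexp (-b • Q)).trace = ((∑ i, Real.exp (-b * hQ.eigenvalues i) : ℝ) : ℂ) := by
  rw [hQ.mexp_neg_smul]
  exact hQ.trace_cfc_s9 _

lemma gibbs_eq_cfc (hQ : Q.IsHermitian) (b : ℝ) : gibbs Q b = cfc (hQ.gibbsWeight b) Q := by
  rw [gibbs, hQ.trace_mexp_neg_smul, hQ.mexp_neg_smul, ← Complex.ofReal_inv,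
    Complex.coe_smul, ← cfc_const_mul _ _ _ (continuousOn_spectrum Q _)]
  rfl

lemma isHermitian_gibbs (hQ : Q.IsHermitian) (b : ℝ) : (gibbs Q b).IsHermitian := by
  rw [hQ.gibbs_eq_cfc]
  exact cfc_predicate _ Q

lemma sum_gibbsWeight [Nonempty n] (hQ : Q.IsHermitian) (b : ℝ) :
    ∑ i, hQ.gibbsWeight b (hQ.eigenvalues i) = 1 := by
  simp only [gibbsWeight, ← Finset.mul_sum]
  exact inv_mul_cancel₀ (Finset.sum_pos (fun i _ => Real.exp_pos _) Finset.univ_nonempty).ne'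

lemma trace_gibbs [Nonempty n] (hQ : Q.IsHermitian) (b : ℝ) : (gibbs Q b).trace = 1 := by
  rw [hQ.gibbs_eq_cfc, hQ.trace_cfc_s9, hQ.sum_gibbsWeight, RCLike.ofReal_one]

lemma log_gibbsWeight [Nonempty n] (hQ : Q.IsHermitian) (b x : ℝ) :
    Real.log (hQ.gibbsWeight b x) = -b * x - Real.log (mexp (-b • Q)).trace.re := by
  rw [gibbsWeight, hQ.trace_mexp_neg_smul, Complex.ofReal_re,
    Real.log_mul (inv_ne_zero (Finset.sum_pos (fun i _ => Real.exp_pos _) Finset.univ_nonempty).ne')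
      (Real.exp_pos _).ne', Real.log_inv, Real.log_exp]
  ring

lemma eqEnergy_eq_sum (hQ : Q.IsHermitian) (b : ℝ) :
    eqEnergy Q b = ∑ i, hQ.gibbsWeight b (hQ.eigenvalues i) * hQ.eigenvalues i := by
  have : cfc (hQ.gibbsWeight b) Q * Q = cfc (fun x => hQ.gibbsWeight b x * x) Q := by
    rw [cfc_mul _ _ Q (continuousOn_spectrum Q _), cfc_id' ℝ Q]
  rw [eqEnergy, hQ.gibbs_eq_cfc, this, hQ.trace_cfc_s9, ← RCLike.re_to_complex, RCLike.ofReal_re]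

lemma vnEntropy_gibbs_eq_sum (hQ : Q.IsHermitian) (b : ℝ) :
    vnEntropy (gibbs Q b) = -∑ i, hQ.gibbsWeight b (hQ.eigenvalues i) *
      Real.log (hQ.gibbsWeight b (hQ.eigenvalues i)) := by
  rw [vnEntropy_eq_neg_trace_cfc (hQ.isHermitian_gibbs b), hQ.gibbs_eq_cfc,
    ← cfc_comp' _ _ Q (((spectrum ℝ Q).toFinite.image _).continuousOn _)
      (continuousOn_spectrum Q _),
    hQ.trace_cfc_s9, ← RCLike.re_to_complex, RCLike.ofReal_re]

lemma vnEntropy_gibbs [Nonempty n] (hQ : Q.IsHermitian) (b : ℝ) :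
    vnEntropy (gibbs Q b) = Real.log (mexp (-b • Q)).trace.re + b * eqEnergy Q b := by
  rw [hQ.vnEntropy_gibbs_eq_sum, hQ.eqEnergy_eq_sum]
  simp only [log_gibbsWeight, mul_sub, Finset.sum_sub_distrib, ← Finset.sum_mul,
    hQ.sum_gibbsWeight, mul_left_comm _ (-b), ← Finset.mul_sum]
  ring

end IsHermitian

end Matrix

lemma ptraceB_kronecker {A B : Type*} [Fintype B] (M : Matrix A A ℂ) (N : Matrix B B ℂ) :
    ptraceB (M ⊗ₖ N) = N.trace • M := by
  ext a a'
  simp [ptraceB, trace, ← Finset.mul_sum, mul_comm]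

section Erasure

variable {A : Type*} [DecidableEq A]

variable (A) in
def swapMatrix : Matrix (A × A) (A × A) ℂ :=
  Equiv.Perm.permMatrix ℂ (Equiv.prodComm A A)

lemma swapMatrix_conjTranspose : (swapMatrix A)ᴴ = swapMatrix A := by
  rw [swapMatrix, conjTranspose_permMatrix]
  rfl

variable [Fintype A]

lemma swapMatrix_mul_self : swapMatrix A * swapMatrix A = 1 := by
  rw [swapMatrix, ← permMatrix_mul, show Equiv.prodComm A A * Equiv.prodComm A A = 1 from
    Equiv.ext fun _ => rfl, permMatrix_one]

lemma swapMatrix_mul_kronecker_mul_swapMatrix (M N : Matrix A A ℂ) :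
    swapMatrix A * (M ⊗ₖ N) * swapMatrix A = N ⊗ₖ M := by
  rw [swapMatrix, PEquiv.toMatrix_toPEquiv_mul, PEquiv.mul_toMatrix_toPEquiv]
  ext ⟨i, j⟩ ⟨k, l⟩
  simp [mul_comm]

def erasureUnitary (V : Matrix A A ℂ) : Matrix (A × A) (A × A) ℂ :=
  (V ⊗ₖ 1) * swapMatrix A

lemma erasureUnitary_conjTranspose (V : Matrix A A ℂ) :
    (erasureUnitary V)ᴴ = swapMatrix A * (Vᴴ ⊗ₖ 1) := by
  rw [erasureUnitary, conjTranspose_mul, swapMatrix_conjTranspose, conjTranspose_kronecker,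
    conjTranspose_one]

lemma erasureUnitary_conjTranspose_mul_self {V : Matrix A A ℂ} (hV : Vᴴ * V = 1) :
    (erasureUnitary V)ᴴ * erasureUnitary V = 1 := by
  rw [erasureUnitary_conjTranspose, erasureUnitary, mul_assoc, ← mul_assoc (Vᴴ ⊗ₖ 1),
    ← mul_kronecker_mul, hV, one_mul, one_kronecker_one, one_mul, swapMatrix_mul_self]

lemma erasureUnitary_mul_kronecker_mul (V ρ σ : Matrix A A ℂ) :
    erasureUnitary V * (ρ ⊗ₖ σ) * (erasureUnitary V)ᴴ = (V * σ * Vᴴ) ⊗ₖ ρ := by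
  rw [erasureUnitary_conjTranspose, erasureUnitary]
  calc (V ⊗ₖ 1) * swapMatrix A * (ρ ⊗ₖ σ) * (swapMatrix A * (Vᴴ ⊗ₖ 1))
      = (V ⊗ₖ 1) * (swapMatrix A * (ρ ⊗ₖ σ) * swapMatrix A) * (Vᴴ ⊗ₖ 1) := by
        simp only [mul_assoc]
    _ = (V * σ * Vᴴ) ⊗ₖ ρ := by
        rw [swapMatrix_mul_kronecker_mul_swapMatrix, ← mul_kronecker_mul, ← mul_kronecker_mul,
          one_mul, mul_one]

lemma hto_erasureUnitary {V : Matrix A A ℂ} (hV : Vᴴ * V = 1) (H : Matrix A A ℂ) (b : ℝ) :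
    hto H b (erasureUnitary V) = (gibbs H b).trace • H - eqEnergy H b • 1 := by
  have : (1 ⊗ₖ gibbs H b) * (erasureUnitary V)ᴴ * (1 ⊗ₖ H) * erasureUnitary V
      = H ⊗ₖ gibbs H b := by
    rw [erasureUnitary_conjTranspose, erasureUnitary]
    calc (1 ⊗ₖ gibbs H b) * (swapMatrix A * (Vᴴ ⊗ₖ 1)) * (1 ⊗ₖ H) *
          ((V ⊗ₖ 1) * swapMatrix A)
        = (1 ⊗ₖ gibbs H b) *
            (swapMatrix A * ((Vᴴ ⊗ₖ 1) * (1 ⊗ₖ H) * (V ⊗ₖ 1)) * swapMatrix A) := by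
          simp only [mul_assoc]
      _ = H ⊗ₖ gibbs H b := by
          rw [← mul_kronecker_mul, ← mul_kronecker_mul, mul_one, one_mul, mul_one, hV,
            swapMatrix_mul_kronecker_mul_swapMatrix, ← mul_kronecker_mul, one_mul, mul_one]
  rw [hto, this, ptraceB_kronecker]

end Erasure

theorem complete_erasure_sufficiency_equality_case_general
    {A : Type*} [Fintype A] [DecidableEq A] [Nonempty A]
    {b : ℝ} (hb : 0 < b)
    (Q : Matrix A A ℂ) (hQ : Q.IsHermitian)
    (ρ0 : Matrix A A ℂ) (hρ0 : IsDensityMatrix ρ0)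
    (hJ : -Real.log ((Matrix.trace (mexp (-b • Q))).re) = -vnEntropy ρ0)
    (hiso : ((Matrix.trace (mexp (-b • Q)))⁻¹ • mexp (-b • Q)).charpoly = ρ0.charpoly) :
    ∃ (H_B : Matrix A A ℂ) (U : Matrix (A × A) (A × A) ℂ),
      H_B.IsHermitian ∧ Uᴴ * U = 1 ∧
      (∀ ρ : Matrix A A ℂ, IsDensityMatrix ρ →
        ptraceB (U * (ρ ⊗ₖ gibbs H_B b) * Uᴴ) = ρ0) ∧
      hto H_B b U = Q := by
  have hσ := hQ.isHermitian_gibbs b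
  have hρ0h : ρ0.IsHermitian := hρ0.1.isHermitian
  obtain ⟨V, hV, hVσ⟩ := hσ.exists_unitary_conj_eq_of_charpoly_eq hρ0h hiso
  have hE : eqEnergy Q b = 0 := by
    have hS := hσ.vnEntropy_eq_of_charpoly_eq hρ0h hiso
    rw [hQ.vnEntropy_gibbs b] at hS
    have : b * eqEnergy Q b = 0 := by linarith
    exact (mul_eq_zero.1 this).resolve_left hb.ne'
  refine ⟨Q, erasureUnitary V, hQ, erasureUnitary_conjTranspose_mul_self hV,
    fun ρ hρ => ?_, ?_⟩
  · rw [erasureUnitary_mul_kronecker_mul, ptraceB_kronecker, hρ.2, one_smul, hVσ]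
  · rw [hto_erasureUnitary hV, hQ.trace_gibbs, hE, one_smul, zero_smul, sub_zero]

/-- Sufficiency in the characterization of HTOs of complete erasures,
equality case (Theorem 2, case (ii)). -/
theorem complete_erasure_sufficiency_equality_case
    {A : Type*} [Fintype A] [DecidableEq A] [Nonempty A]
    {b : ℝ} (hb : 0 < b)
    (Q : Matrix A A ℂ) (hQ : Q.IsHermitian)
    (ρ0 : Matrix A A ℂ) (hρ0 : IsDensityMatrix ρ0) (hρ0pd : ρ0.PosDef)
    (hJ : -Real.log ((Matrix.trace (mexp (-b • Q))).re) = -vnEntropy ρ0)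
    (hiso : ((Matrix.trace (mexp (-b • Q)))⁻¹ • mexp (-b • Q)).charpoly = ρ0.charpoly) :
    ∃ (H_B : Matrix A A ℂ) (U : Matrix (A × A) (A × A) ℂ),
      H_B.IsHermitian ∧ Uᴴ * U = 1 ∧
      (∀ ρ : Matrix A A ℂ, IsDensityMatrix ρ →
        ptraceB (U * (ρ ⊗ₖ gibbs H_B b) * Uᴴ) = ρ0) ∧
      hto H_B b U = Q :=
  complete_erasure_sufficiency_equality_case_general hb Q hQ ρ0 hρ0 hJ hiso
end

section
/- Structure of HTOs in terms of Kraus operators (Theorem 4(a), finite-dimensional bath): consider a realization setup (A, B, H_B, b, U) with heat transfer operator Q. Let n ≥ 1 and M : Fin n → Matrix A A ℂ be a linearly independent family with ∑ i, M iᴴ * M i = 1, and suppose that for every density matrix ρ on A, tr_B (U * (ρ ⊗ₖ ρ_B) * Uᴴ) = ∑ i, M i * ρ * (M i)ᴴ. Then there exists a Hermitian matrix q : Matrix (Fin n) (Fin n) ℂ such that Q = ∑ i, ∑ j, q i j • ((M i)ᴴ * M j). -/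
open Matrix Kronecker
open scoped ComplexOrder

/-!
Factor the Gibbs state as `ρ_B = S Sᴴ` and put `V = U (1 ⊗ S)`. The bath blocks
`K_(k,l) = ⟨k|V|l⟩` are Kraus operators of the channel `ρ ↦ tr_B (U (ρ ⊗ ρ_B) Uᴴ)`, and
`tr_B ((1 ⊗ ρ_B) Uᴴ (1 ⊗ H_B) U) = ∑ (H_B)_(k,k') K_(k,l)ᴴ K_(k',l)`. Since density matrices span
all matrices, the families `K` and `M` define the same linear map `X ↦ ∑ K X Kᴴ`, and then every
`K_β` is a combination `∑ C_(β,i) M_i`: a functional `φ` vanishing on the `M_i` satisfies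
`∑ |φ (K_β)|² = ∑ |φ (M_i)|² = 0`. Hence `q = Cᴴ (H_B ⊗ 1) C - E_B • 1` works.
-/

section PartialTrace

variable {A B : Type*} [Fintype A] [Fintype B]

lemma ptraceB_one_kronecker_mul_comm [DecidableEq A] (S : Matrix B B ℂ)
    (X : Matrix (A × B) (A × B) ℂ) :
    ptraceB (((1 : Matrix A A ℂ) ⊗ₖ S) * X) = ptraceB (X * ((1 : Matrix A A ℂ) ⊗ₖ S)) := by
  ext a a'
  simp only [ptraceB, of_apply, mul_apply, Fintype.sum_prod_type_right, kronecker_apply,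
    one_apply, ite_mul, one_mul, zero_mul, mul_ite, mul_zero, Finset.sum_ite_eq,
    Finset.sum_ite_eq', Finset.mem_univ, if_true]
  rw [Finset.sum_comm]
  exact Finset.sum_congr rfl fun _ _ => Finset.sum_congr rfl fun _ _ => mul_comm _ _

/-- The operator `⟨k|V|l⟩` on the device, for `β = (k, l)`. -/
def bathBlock (V : Matrix (A × B) (A × B) ℂ) (β : B × B) : Matrix A A ℂ :=
  of fun a c => V (a, β.1) (c, β.2)

lemma ptraceB_mul_kronecker_one_mul_conjTranspose [DecidableEq B]
    (V : Matrix (A × B) (A × B) ℂ) (ρ : Matrix A A ℂ) :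
    ptraceB (V * (ρ ⊗ₖ (1 : Matrix B B ℂ)) * Vᴴ)
      = ∑ β, bathBlock V β * ρ * (bathBlock V β)ᴴ := by
  ext a a'
  simp only [ptraceB, bathBlock, of_apply, mul_apply, Matrix.sum_apply, Fintype.sum_prod_type,
    kronecker_apply, one_apply, conjTranspose_apply, mul_ite, mul_one, mul_zero, ite_mul,
    zero_mul, Finset.sum_ite_eq', Finset.mem_univ, if_true, Finset.sum_mul]
  exact Finset.sum_congr rfl fun _ _ => Finset.sum_comm

lemma ptraceB_conjTranspose_mul_one_kronecker_mul [DecidableEq A] [DecidableEq B]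
    (V : Matrix (A × B) (A × B) ℂ) (H : Matrix B B ℂ) :
    ptraceB (Vᴴ * ((1 : Matrix A A ℂ) ⊗ₖ H) * V)
      = ∑ β, ∑ β', (H ⊗ₖ (1 : Matrix B B ℂ)) β β' • ((bathBlock V β)ᴴ * bathBlock V β') := by
  simp only [Fintype.sum_prod_type, kronecker_apply, one_apply, mul_ite, mul_one, mul_zero,
    ite_smul, zero_smul, Finset.sum_ite_eq, Finset.mem_univ, if_true]
  ext a a'
  simp only [ptraceB, bathBlock, of_apply, mul_apply, Matrix.sum_apply, Matrix.smul_apply,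
    smul_eq_mul, Fintype.sum_prod_type_right, kronecker_apply, one_apply, conjTranspose_apply,
    ite_mul, mul_ite, mul_zero, zero_mul, Finset.sum_ite_eq', Finset.mem_univ, if_true,
    Finset.sum_mul, Finset.mul_sum]
  conv_rhs => rw [Finset.sum_comm]
  refine Finset.sum_congr rfl fun l _ => ?_
  conv_rhs => rw [Finset.sum_comm]
  refine Finset.sum_congr rfl fun k' _ => ?_
  conv_rhs => rw [Finset.sum_comm]
  exact Finset.sum_congr rfl fun _ _ => Finset.sum_congr rfl fun _ _ => by ring

end PartialTrace

section KrausMap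

variable {A : Type*} [Fintype A]

lemma Matrix.PosSemidef.mem_span_isDensityMatrix {P : Matrix A A ℂ} (hP : P.PosSemidef) :
    P ∈ Submodule.span ℂ {ρ | IsDensityMatrix ρ} := by
  by_cases htr : P.trace = 0
  · rw [hP.trace_eq_zero_iff.mp htr]
    exact Submodule.zero_mem _
  have hdens : IsDensityMatrix (P.trace⁻¹ • P) :=
    ⟨hP.smul (inv_nonneg_of_nonneg hP.trace_nonneg),
      by rw [trace_smul, smul_eq_mul, inv_mul_cancel₀ htr]⟩
  rw [← smul_inv_smul₀ htr P]
  exact Submodule.smul_mem _ _ (Submodule.subset_span hdens)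

lemma vecMulVec_mem_span_isDensityMatrix (x y : A → ℂ) :
    vecMulVec x (star y) ∈ Submodule.span ℂ {ρ : Matrix A A ℂ | IsDensityMatrix ρ} := by
  have hpolarization : (4 : ℂ) • vecMulVec x (star y) = vecMulVec (x + y) (star (x + y))
      + Complex.I • vecMulVec (x + Complex.I • y) (star (x + Complex.I • y))
      - vecMulVec (x - y) (star (x - y))
      - Complex.I • vecMulVec (x - Complex.I • y) (star (x - Complex.I • y)) := by
    ext a c
    simp only [Matrix.smul_apply, Matrix.add_apply, Matrix.sub_apply, vecMulVec_apply,
      Pi.add_apply, Pi.sub_apply, Pi.smul_apply, Pi.star_apply, smul_eq_mul, star_add, star_sub,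
      star_mul', Complex.star_def, Complex.conj_I]
    linear_combination
      (2 * (x a * (starRingEnd ℂ) (y c) - y a * (starRingEnd ℂ) (x c))) * Complex.I_sq
  have hmem (u : A → ℂ) :=
    Matrix.PosSemidef.mem_span_isDensityMatrix (posSemidef_vecMulVec_self_star u)
  rw [← inv_smul_smul₀ (four_ne_zero' ℂ) (vecMulVec x (star y)), hpolarization]
  exact Submodule.smul_mem _ _ (Submodule.sub_mem _ (Submodule.sub_mem _ (Submodule.add_mem _
    (hmem _) (Submodule.smul_mem _ _ (hmem _))) (hmem _)) (Submodule.smul_mem _ _ (hmem _)))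

lemma span_isDensityMatrix [DecidableEq A] :
    Submodule.span ℂ {ρ : Matrix A A ℂ | IsDensityMatrix ρ} = ⊤ := by
  refine Submodule.eq_top_iff'.mpr fun X => Matrix.induction_on' X (Submodule.zero_mem _)
    (fun _ _ => Submodule.add_mem _) fun i j z => ?_
  have hsingle : single i j z = z • vecMulVec (Pi.single i 1) (star (Pi.single j 1)) := by
    rw [← Pi.single_star, star_one, ← single_eq_single_vecMulVec_single, smul_single,
      smul_eq_mul, mul_one]
  rw [hsingle]
  exact Submodule.smul_mem _ _ (vecMulVec_mem_span_isDensityMatrix _ _)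

def krausMap {ι : Type*} [Fintype ι] (K : ι → Matrix A A ℂ) : Matrix A A ℂ →ₗ[ℂ] Matrix A A ℂ :=
  ∑ β, LinearMap.mulRight ℂ (K β)ᴴ ∘ₗ LinearMap.mulLeft ℂ (K β)

lemma krausMap_apply {ι : Type*} [Fintype ι] (K : ι → Matrix A A ℂ) (X : Matrix A A ℂ) :
    krausMap K X = ∑ β, K β * X * (K β)ᴴ := by
  simp [krausMap, LinearMap.sum_apply]

lemma krausMap_single_one_apply [DecidableEq A] {ι : Type*} [Fintype ι] (K : ι → Matrix A A ℂ)
    (a a' c c' : A) :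
    krausMap K (single c c' 1) a a' = ∑ β, K β a c * star (K β a' c') := by
  simp [krausMap_apply, Matrix.sum_apply, mul_apply, single_apply, ite_and]

lemma Module.Dual.apply_eq_sum_single [DecidableEq A] (φ : Module.Dual ℂ (Matrix A A ℂ))
    (X : Matrix A A ℂ) :
    φ X = ∑ q : A × A, X q.1 q.2 * φ (single q.1 q.2 1) := by
  conv_lhs => rw [matrix_eq_sum_single X]
  simp only [map_sum, Fintype.sum_prod_type]
  refine Finset.sum_congr rfl fun a _ => Finset.sum_congr rfl fun c _ => ?_
  rw [show single a c (X a c) = X a c • single a c 1 by rw [smul_single, smul_eq_mul, mul_one],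
    map_smul, smul_eq_mul]

lemma sum_dual_mul_star_eq_sum_krausMap_single [DecidableEq A] {ι : Type*} [Fintype ι]
    (K : ι → Matrix A A ℂ) (φ : Module.Dual ℂ (Matrix A A ℂ)) :
    ∑ β, φ (K β) * star (φ (K β)) = ∑ q : A × A, ∑ q' : A × A,
      φ (single q.1 q.2 1) * star (φ (single q'.1 q'.2 1)) *
        krausMap K (single q.2 q'.2 1) q.1 q'.1 := by
  simp only [Module.Dual.apply_eq_sum_single φ (K _), krausMap_single_one_apply, star_sum,
    star_mul', Finset.sum_mul_sum]
  simp only [Finset.mul_sum]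
  rw [Finset.sum_comm]
  refine Finset.sum_congr rfl fun q _ => ?_
  rw [Finset.sum_comm]
  exact Finset.sum_congr rfl fun q' _ => Finset.sum_congr rfl fun β _ => by ring

lemma sum_dual_mul_star_eq_of_krausMap_eq {ι κ : Type*} [Fintype ι] [Fintype κ]
    {K : κ → Matrix A A ℂ} {M : ι → Matrix A A ℂ} (h : krausMap K = krausMap M)
    (φ : Module.Dual ℂ (Matrix A A ℂ)) :
    ∑ β, φ (K β) * star (φ (K β)) = ∑ i, φ (M i) * star (φ (M i)) := by
  classical
  rw [sum_dual_mul_star_eq_sum_krausMap_single, sum_dual_mul_star_eq_sum_krausMap_single, h]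

lemma mem_span_range_of_krausMap_eq {ι κ : Type*} [Fintype ι] [Fintype κ]
    {K : κ → Matrix A A ℂ} {M : ι → Matrix A A ℂ} (h : krausMap K = krausMap M) (β : κ) :
    K β ∈ Submodule.span ℂ (Set.range M) := by
  rw [← Subspace.forall_mem_dualAnnihilator_apply_eq_zero_iff]
  intro φ hφ
  have hM : ∀ i, φ (M i) = 0 := fun i =>
    (Submodule.mem_dualAnnihilator φ).mp hφ _ (Submodule.subset_span ⟨i, rfl⟩)
  have hK : ∑ β, φ (K β) * star (φ (K β)) = 0 := by
    rw [sum_dual_mul_star_eq_of_krausMap_eq h]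
    simp [hM]
  have hKβ := (Finset.sum_eq_zero_iff_of_nonneg fun β _ => mul_star_self_nonneg (φ (K β))).mp hK
    β (Finset.mem_univ β)
  exact (CStarRing.mul_star_self_eq_zero_iff _).mp hKβ

end KrausMap

section Gibbs

variable {B : Type*} [Fintype B] [DecidableEq B]

open scoped MatrixOrder in
lemma Matrix.PosSemidef.exists_eq_mul_conjTranspose {P : Matrix B B ℂ} (hP : P.PosSemidef) :
    ∃ S : Matrix B B ℂ, P = S * Sᴴ := by
  obtain ⟨T, rfl⟩ := CStarAlgebra.nonneg_iff_eq_star_mul_self.mp hP.nonneg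
  exact ⟨Tᴴ, by rw [conjTranspose_conjTranspose, star_eq_conjTranspose]⟩

lemma gibbs_posSemidef {H : Matrix B B ℂ} (hH : H.IsHermitian) (b : ℝ) :
    (gibbs H b).PosSemidef := by
  have hhalf : (mexp (-(b / 2) • H))ᴴ = mexp (-(b / 2) • H) := by
    rw [mexp, ← Matrix.exp_conjTranspose, conjTranspose_smul, hH.eq, star_trivial]
  have hexp : mexp (-b • H) = mexp (-(b / 2) • H) * (mexp (-(b / 2) • H))ᴴ := by
    rw [hhalf, mexp, mexp, ← Matrix.exp_add_of_commute _ _ (Commute.refl _), ← add_smul,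
      show -(b / 2) + -(b / 2) = -b by ring]
  have hpsd := posSemidef_self_mul_conjTranspose (mexp (-(b / 2) • H))
  rw [gibbs, hexp]
  exact hpsd.smul (inv_nonneg_of_nonneg hpsd.trace_nonneg)

end Gibbs

section Dilation

variable {A B : Type*} [Fintype A] [DecidableEq A] [Fintype B] [DecidableEq B]

lemma ptraceB_mul_kronecker_mul_conjTranspose_mul_self (U : Matrix (A × B) (A × B) ℂ)
    (S : Matrix B B ℂ) (ρ : Matrix A A ℂ) :
    ptraceB (U * (ρ ⊗ₖ (S * Sᴴ)) * Uᴴ) = ∑ β, bathBlock (U * ((1 : Matrix A A ℂ) ⊗ₖ S)) β * ρ *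
      (bathBlock (U * ((1 : Matrix A A ℂ) ⊗ₖ S)) β)ᴴ := by
  have hρ : ρ ⊗ₖ (S * Sᴴ) = ((1 : Matrix A A ℂ) ⊗ₖ S) * (ρ ⊗ₖ (1 : Matrix B B ℂ)) *
      ((1 : Matrix A A ℂ) ⊗ₖ Sᴴ) := by
    rw [← mul_kronecker_mul, ← mul_kronecker_mul, one_mul, mul_one, mul_one]
  rw [← ptraceB_mul_kronecker_one_mul_conjTranspose, conjTranspose_mul, conjTranspose_kronecker,
    conjTranspose_one, hρ]
  simp only [Matrix.mul_assoc]

lemma ptraceB_one_kronecker_mul_conjTranspose_self (U : Matrix (A × B) (A × B) ℂ)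
    (S H : Matrix B B ℂ) :
    ptraceB (((1 : Matrix A A ℂ) ⊗ₖ (S * Sᴴ)) * Uᴴ * ((1 : Matrix A A ℂ) ⊗ₖ H) * U)
      = ∑ β, ∑ β', (H ⊗ₖ (1 : Matrix B B ℂ)) β β' •
        ((bathBlock (U * ((1 : Matrix A A ℂ) ⊗ₖ S)) β)ᴴ *
          bathBlock (U * ((1 : Matrix A A ℂ) ⊗ₖ S)) β') := by
  rw [← ptraceB_conjTranspose_mul_one_kronecker_mul, conjTranspose_mul, conjTranspose_kronecker,
    conjTranspose_one, ← one_mul (1 : Matrix A A ℂ), mul_kronecker_mul, one_mul]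
  simp only [Matrix.mul_assoc]
  rw [ptraceB_one_kronecker_mul_comm]
  simp only [Matrix.mul_assoc]

end Dilation

lemma sum_smul_conjTranspose_mul_eq_of_sum_smul_eq {A ι κ : Type*} [Fintype A] [Fintype ι]
    [Fintype κ] (G : Matrix κ κ ℂ) (C : Matrix κ ι ℂ) {M : ι → Matrix A A ℂ}
    {K : κ → Matrix A A ℂ} (hK : ∀ β, ∑ i, C β i • M i = K β) :
    ∑ β, ∑ β', G β β' • ((K β)ᴴ * K β') = ∑ i, ∑ j, (Cᴴ * G * C) i j • ((M i)ᴴ * M j) := by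
  have hcoeff : ∀ i j, (Cᴴ * G * C) i j = ∑ β, ∑ β', star (C β i) * G β β' * C β' j := by
    intro i j
    simp only [mul_apply, conjTranspose_apply, Finset.sum_mul]
    exact Finset.sum_comm
  have hswap : ∀ g : κ → ι → ι → Matrix A A ℂ,
      ∑ β, ∑ i, ∑ j, g β i j = ∑ i, ∑ j, ∑ β, g β i j := fun g => by
    rw [Finset.sum_comm]
    exact Finset.sum_congr rfl fun i _ => Finset.sum_comm
  simp only [← hK, conjTranspose_sum, conjTranspose_smul, Finset.sum_mul]
  simp only [Finset.mul_sum, Matrix.smul_mul, Matrix.mul_smul, smul_smul, Finset.smul_sum]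
  simp only [hcoeff, Finset.sum_smul]
  rw [Finset.sum_congr rfl fun β _ => hswap _, hswap]
  refine Finset.sum_congr rfl fun i _ => Finset.sum_congr rfl fun j _ =>
    Finset.sum_congr rfl fun β _ => Finset.sum_congr rfl fun β' _ => ?_
  congr 1
  ring

theorem hto_kraus_structure_general
    {A B : Type*} [Fintype A] [DecidableEq A]
    [Fintype B] [DecidableEq B]
    (H_B : Matrix B B ℂ) (hH : H_B.IsHermitian) {b : ℝ}
    (U : Matrix (A × B) (A × B) ℂ)
    (n : ℕ)
    (M : Fin n → Matrix A A ℂ)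
    (hcomp : ∑ i, (M i)ᴴ * M i = 1)
    (hreal : ∀ ρ : Matrix A A ℂ, IsDensityMatrix ρ →
      ptraceB (U * (ρ ⊗ₖ gibbs H_B b) * Uᴴ) = ∑ i, M i * ρ * (M i)ᴴ) :
    ∃ q : Matrix (Fin n) (Fin n) ℂ, q.IsHermitian ∧
      hto H_B b U = ∑ i, ∑ j, q i j • ((M i)ᴴ * M j) := by
  obtain ⟨S, hS⟩ := (gibbs_posSemidef hH b).exists_eq_mul_conjTranspose
  set K := bathBlock (U * ((1 : Matrix A A ℂ) ⊗ₖ S))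
  have hchannel : krausMap K = krausMap M :=
    LinearMap.ext_on span_isDensityMatrix fun ρ hρ => by
      rw [krausMap_apply, krausMap_apply, ← hreal ρ hρ, hS,
        ptraceB_mul_kronecker_mul_conjTranspose_mul_self]
  choose C hC using fun β =>
    (Submodule.mem_span_range_iff_exists_fun ℂ).mp (mem_span_range_of_krausMap_eq hchannel β)
  have hG : (H_B ⊗ₖ (1 : Matrix B B ℂ)).IsHermitian := by
    rw [IsHermitian, conjTranspose_kronecker, hH.eq, conjTranspose_one]
  refine ⟨(of C)ᴴ * (H_B ⊗ₖ 1) * of C - eqEnergy H_B b • 1,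
    (isHermitian_conjTranspose_mul_mul _ hG).sub (isHermitian_one.smul (IsSelfAdjoint.all _)), ?_⟩
  rw [hto, hS, ptraceB_one_kronecker_mul_conjTranspose_self,
    sum_smul_conjTranspose_mul_eq_of_sum_smul_eq _ (of C) hC]
  simp [sub_smul, Finset.sum_sub_distrib, one_apply, ← Finset.smul_sum, hcomp]

/-- Structure of HTOs in terms of Kraus operators (Theorem 4(a)). -/
theorem hto_kraus_structure
    {A B : Type*} [Fintype A] [DecidableEq A] [Nonempty A]
    [Fintype B] [DecidableEq B] [Nonempty B]
    (H_B : Matrix B B ℂ) (hH : H_B.IsHermitian) {b : ℝ} (hb : 0 < b)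
    (U : Matrix (A × B) (A × B) ℂ) (hU : Uᴴ * U = 1)
    (n : ℕ) (hn : 1 ≤ n)
    (M : Fin n → Matrix A A ℂ) (hlin : LinearIndependent ℂ M)
    (hcomp : ∑ i, (M i)ᴴ * M i = 1)
    (hreal : ∀ ρ : Matrix A A ℂ, IsDensityMatrix ρ →
      ptraceB (U * (ρ ⊗ₖ gibbs H_B b) * Uᴴ) = ∑ i, M i * ρ * (M i)ᴴ) :
    ∃ q : Matrix (Fin n) (Fin n) ℂ, q.IsHermitian ∧
      hto H_B b U = ∑ i, ∑ j, q i j • ((M i)ᴴ * M j) :=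
  hto_kraus_structure_general H_B hH U n M hcomp hreal
end

section
/- Orthogonality relations forced by the isometry condition for extremal operations: let d, n ≥ 1, let E be a complex inner product space, and let M : Fin n → Matrix (Fin d) (Fin d) ℂ be such that ∑ i, (M i)ᴴ * M i = 1 and the family of n² matrices ((M i)ᴴ * M j) for (i, j) : Fin n × Fin n is linearly independent. Let L : Fin n → (E →ₗ[ℂ] E), and define U : (Fin d → E) →ₗ[ℂ] (Fin d → E) by (U x) a = ∑ b, ∑ i, (M i a b) • (L i) (x b). Equip Fin d → E with the inner product ⟪x, y⟫ = ∑ a, ⟪x a, y a⟫ (i.e. PiLp 2). If ⟪U x, U y⟫ = ⟪x, y⟫ for all x y : Fin d → E, then for all i j : Fin n and all u v : E, ⟪(L i) u, (L j) v⟫ = (if i = j then 1 else 0) * ⟪u, v⟫. -/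
open Matrix
open scoped InnerProductSpace

/-!
Feeding the isometry the elementary vectors `Pi.single b u` and `Pi.single b' v` turns the
condition `⟪U x, U y⟫ = ⟪x, y⟫` into the matrix identity
`∑ p, ⟪L p.1 u, L p.2 v⟫ • (M p.1)ᴴ * M p.2 = ⟪u, v⟫ • 1`, and the completeness relation
`∑ i, (M i)ᴴ * M i = 1` rewrites the right-hand side as `∑ p, (δ p.1 p.2 * ⟪u, v⟫) • (M p.1)ᴴ * M p.2`.
Linear independence of the family `(M i)ᴴ * M j` then lets one compare coefficients.
-/

section KrausDilation

variable {𝕜 E ι κ : Type*} [RCLike 𝕜] [NormedAddCommGroup E] [InnerProductSpace 𝕜 E]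
  [Fintype ι] [Fintype κ]

def krausDilation (M : ι → Matrix κ κ 𝕜) (L : ι → E →ₗ[𝕜] E) (x : κ → E) : κ → E :=
  fun a => ∑ b, ∑ i, M i a b • L i (x b)

variable [DecidableEq κ] (M : ι → Matrix κ κ 𝕜) (L : ι → E →ₗ[𝕜] E)

lemma krausDilation_single (b : κ) (u : E) (a : κ) :
    krausDilation M L (Pi.single b u) a = ∑ i, M i a b • L i u := by
  rw [krausDilation, Finset.sum_eq_single b]
  · simp
  · intro b₂ _ hb₂
    simp [Pi.single_eq_of_ne hb₂]
  · simp

lemma sum_inner_krausDilation_single (b b' : κ) (u v : E) :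
    ∑ a, ⟪krausDilation M L (Pi.single b u) a, krausDilation M L (Pi.single b' v) a⟫_𝕜 =
      ∑ p : ι × ι, ⟪L p.1 u, L p.2 v⟫_𝕜 * ((M p.1)ᴴ * M p.2) b b' := by
  simp only [krausDilation_single, sum_inner, inner_sum, inner_smul_left, inner_smul_right,
    mul_apply, conjTranspose_apply, RCLike.star_def, Finset.mul_sum, Fintype.sum_prod_type]
  rw [Finset.sum_comm]
  conv_rhs => rw [Finset.sum_comm]
  refine Finset.sum_congr rfl fun j _ => ?_
  rw [Finset.sum_comm]
  exact Finset.sum_congr rfl fun i _ => Finset.sum_congr rfl fun a _ => by ring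

end KrausDilation

lemma sum_inner_single_single {𝕜 E κ : Type*} [RCLike 𝕜] [NormedAddCommGroup E]
    [InnerProductSpace 𝕜 E] [Fintype κ] [DecidableEq κ] (b b' : κ) (u v : E) :
    ∑ a, ⟪(Pi.single b u : κ → E) a, (Pi.single b' v : κ → E) a⟫_𝕜 =
      (1 : Matrix κ κ 𝕜) b b' * ⟪u, v⟫_𝕜 := by
  rw [Finset.sum_eq_single b (fun a _ ha => by simp [Pi.single_eq_of_ne ha]) (by simp)]
  rcases eq_or_ne b b' with rfl | hb
  · simp
  · simp [Pi.single_eq_of_ne hb, one_apply_ne hb]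

lemma sum_diagonal_smul {R A ι : Type*} [Semiring R] [AddCommMonoid A] [Module R A]
    [Fintype ι] [DecidableEq ι] (c : R) (G : ι × ι → A) :
    ∑ p : ι × ι, ((if p.1 = p.2 then 1 else 0) * c) • G p = c • ∑ i, G (i, i) := by
  simp [Fintype.sum_prod_type, ite_smul, Finset.smul_sum]

theorem isometry_forces_orthogonality_general
    {E : Type*} [NormedAddCommGroup E] [InnerProductSpace ℂ E]
    (d n : ℕ)
    (M : Fin n → Matrix (Fin d) (Fin d) ℂ)
    (hcomp : ∑ i, (M i)ᴴ * M i = 1)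
    (hlin : LinearIndependent ℂ (fun p : Fin n × Fin n => (M p.1)ᴴ * M p.2))
    (L : Fin n → (E →ₗ[ℂ] E))
    (U : (Fin d → E) →ₗ[ℂ] (Fin d → E))
    (hUdef : ∀ (x : Fin d → E) (a : Fin d), U x a = ∑ b : Fin d, ∑ i, M i a b • L i (x b))
    (hUiso : ∀ x y : Fin d → E,
      ∑ a, (inner ℂ (U x a) (U y a) : ℂ) = ∑ a, (inner ℂ (x a) (y a) : ℂ)) :
    ∀ (i j : Fin n) (u v : E),
      (inner ℂ (L i u) (L j v) : ℂ) = (if i = j then 1 else 0) * (inner ℂ u v : ℂ) := by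
  intro i j u v
  have hU : ⇑U = krausDilation M L := funext fun x => funext (hUdef x)
  have hgram : ∑ p : Fin n × Fin n, ⟪L p.1 u, L p.2 v⟫_ℂ • ((M p.1)ᴴ * M p.2) =
      ∑ p : Fin n × Fin n, ((if p.1 = p.2 then 1 else 0) * ⟪u, v⟫_ℂ) • ((M p.1)ᴴ * M p.2) := by
    rw [sum_diagonal_smul, hcomp]
    ext b b'
    have h := hUiso (Pi.single b u) (Pi.single b' v)
    rw [hU, sum_inner_krausDilation_single, sum_inner_single_single] at h
    simpa [Matrix.sum_apply, mul_comm] using h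
  exact Fintype.linearIndependent_iffₛ.1 hlin _ _ hgram (i, j)

/-- Orthogonality relations forced by the isometry condition for
extremal operations. -/
theorem isometry_forces_orthogonality
    {E : Type*} [NormedAddCommGroup E] [InnerProductSpace ℂ E]
    (d n : ℕ) (hd : 1 ≤ d) (hn : 1 ≤ n)
    (M : Fin n → Matrix (Fin d) (Fin d) ℂ)
    (hcomp : ∑ i, (M i)ᴴ * M i = 1)
    (hlin : LinearIndependent ℂ (fun p : Fin n × Fin n => (M p.1)ᴴ * M p.2))
    (L : Fin n → (E →ₗ[ℂ] E))
    (U : (Fin d → E) →ₗ[ℂ] (Fin d → E))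
    (hUdef : ∀ (x : Fin d → E) (a : Fin d), U x a = ∑ b : Fin d, ∑ i, M i a b • L i (x b))
    (hUiso : ∀ x y : Fin d → E,
      ∑ a, (inner ℂ (U x a) (U y a) : ℂ) = ∑ a, (inner ℂ (x a) (y a) : ℂ)) :
    ∀ (i j : Fin n) (u v : E),
      (inner ℂ (L i u) (L j v) : ℂ) = (if i = j then 1 else 0) * (inner ℂ u v : ℂ) :=
  isometry_forces_orthogonality_general d n M hcomp hlin L U hUdef hUiso
end

section
/- Heat transfer matrices satisfying Szilard's bound yield positive definite HTOs: let n ≥ 1, b > 0, and q : Matrix (Fin n) (Fin n) ℂ Hermitian with (Matrix.trace (exp (-b • q))).re < 1. Let A be a finite nonempty type and M : Fin n → Matrix A A ℂ with ∑ i, (M i)ᴴ * M i = 1. Then the Hermitian matrix Q = ∑ i, ∑ j, q i j • ((M i)ᴴ * M j) is positive definite. -/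
/-!
Szilard's bound forces `q` to be positive definite: in an eigenbasis of `q`,
`tr exp(-b q) = ∑ᵢ exp(-b λᵢ)`, so every `exp(-b λᵢ) < 1` and hence every `λᵢ > 0`.
Stacking the Kraus-type matrices `M i` into one tall matrix `K`, the matrix in question is
`Kᴴ (q ⊗ 1) K`, and `Kᴴ K = ∑ᵢ (M i)ᴴ M i = 1` makes `K` injective, so positive definiteness
passes from `q ⊗ 1` to it.
-/

open Matrix Kronecker
open scoped ComplexOrder

namespace Matrix

section Exponential

variable {𝕜 n : Type*} [RCLike 𝕜] [Fintype n] [DecidableEq n]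

lemma IsHermitian.trace_cfc_s17 {A : Matrix n n 𝕜} (hA : A.IsHermitian) (f : ℝ → ℝ) :
    (cfc f A).trace = ∑ i, (f (hA.eigenvalues i) : 𝕜) := by
  rw [hA.cfc_eq, IsHermitian.cfc, Unitary.conjStarAlgAut_apply, trace_mul_cycle,
    Unitary.coe_star_mul_self, one_mul, trace_diagonal]
  rfl

-- `mexp` needs only the topology of matrices; the CFC needs a normed algebra, and any
-- choice of norm induces that topology.
open scoped Matrix.Norms.L2Operator in
lemma IsHermitian.mexp_smul_s17 {q : Matrix n n ℂ} (hq : q.IsHermitian) (t : ℝ) :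
    mexp (t • q) = cfc (fun x => Real.exp (t * x)) q := by
  rw [mexp, ← CFC.real_exp_eq_normedSpace_exp, ← cfc_comp_smul t Real.exp q]
  rfl

lemma IsHermitian.re_trace_mexp_smul_s17 {q : Matrix n n ℂ} (hq : q.IsHermitian) (t : ℝ) :
    (mexp (t • q)).trace.re = ∑ i, Real.exp (t * hq.eigenvalues i) := by
  simp only [hq.mexp_smul_s17, hq.trace_cfc_s17, Complex.re_sum]
  rfl

lemma IsHermitian.posDef_of_re_trace_mexp_neg_smul_lt_one {q : Matrix n n ℂ}
    (hq : q.IsHermitian) {b : ℝ} (hb : 0 < b) (hlt : (mexp (-b • q)).trace.re < 1) :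
    q.PosDef := by
  refine hq.posDef_iff_eigenvalues_pos.mpr fun i => ?_
  have hexp : Real.exp (-b * hq.eigenvalues i) < 1 := by
    refine lt_of_le_of_lt ?_ (hq.re_trace_mexp_smul_s17 (-b) ▸ hlt)
    exact Finset.single_le_sum (f := fun j => Real.exp (-b * hq.eigenvalues j))
      (fun j _ => (Real.exp_pos _).le) (Finset.mem_univ i)
  nlinarith [Real.exp_lt_one_iff.mp hexp]

end Exponential

lemma mulVec_injective_of_mul_eq_one {R m n : Type*} [Semiring R] [Fintype m] [Fintype n]
    [DecidableEq n] {B : Matrix n m R} {K : Matrix m n R} (h : B * K = 1) :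
    Function.Injective K.mulVec :=
  Function.LeftInverse.injective (g := B.mulVec) fun x => by
    rw [mulVec_mulVec, h, one_mulVec]

section Stacking

variable {R ι m n : Type*} [CommSemiring R] [StarRing R] [Fintype ι] [Fintype m]

def stackRows (M : ι → Matrix m n R) : Matrix (ι × m) n R :=
  of fun p c => M p.1 p.2 c

lemma conjTranspose_stackRows_mul_self (M : ι → Matrix m n R) :
    (stackRows M)ᴴ * stackRows M = ∑ i, (M i)ᴴ * M i := by
  ext a c
  simp [stackRows, mul_apply, Fintype.sum_prod_type, sum_apply]

lemma conjTranspose_stackRows_mul_kronecker_one_mul [DecidableEq m] (M : ι → Matrix m n R)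
    (q : Matrix ι ι R) :
    (stackRows M)ᴴ * (q ⊗ₖ (1 : Matrix m m R)) * stackRows M =
      ∑ i, ∑ j, q i j • ((M i)ᴴ * M j) := by
  ext a c
  simp only [stackRows, mul_apply, conjTranspose_apply, of_apply, kroneckerMap_apply, one_apply,
    mul_ite, mul_one, mul_zero, Fintype.sum_prod_type, Finset.sum_ite_eq', Finset.mem_univ,
    ↓reduceIte, Finset.sum_mul, sum_apply, smul_apply, smul_eq_mul, Finset.mul_sum]
  conv_lhs => enter [2, j]; rw [Finset.sum_comm]
  rw [Finset.sum_comm]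
  exact Finset.sum_congr rfl fun i _ => Finset.sum_congr rfl fun j _ =>
    Finset.sum_congr rfl fun k _ => by ring

end Stacking

lemma PosDef.sum_smul_conjTranspose_mul {𝕜 ι m n : Type*} [RCLike 𝕜] [Fintype ι] [Fintype m]
    [DecidableEq m] [Fintype n] [DecidableEq n] {q : Matrix ι ι 𝕜} (hq : q.PosDef)
    {M : ι → Matrix m n 𝕜} (hM : ∑ i, (M i)ᴴ * M i = 1) :
    (∑ i, ∑ j, q i j • ((M i)ᴴ * M j)).PosDef := by
  rw [← conjTranspose_stackRows_mul_kronecker_one_mul]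
  exact (hq.kronecker PosDef.one).conjTranspose_mul_mul_same
    (mulVec_injective_of_mul_eq_one (conjTranspose_stackRows_mul_self M ▸ hM))

end Matrix

theorem szilard_bound_implies_posdef_general
    (n : ℕ) {b : ℝ} (hb : 0 < b)
    (q : Matrix (Fin n) (Fin n) ℂ) (hq : q.IsHermitian)
    (hlt : (Matrix.trace (mexp (-b • q))).re < 1)
    {A : Type*} [Fintype A] [DecidableEq A]
    (M : Fin n → Matrix A A ℂ) (hcomp : ∑ i, (M i)ᴴ * M i = 1) :
    (∑ i, ∑ j, q i j • ((M i)ᴴ * M j)).PosDef :=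
  (hq.posDef_of_re_trace_mexp_neg_smul_lt_one hb hlt).sum_smul_conjTranspose_mul hcomp

/-- Heat transfer matrices satisfying Szilard's bound yield positive
definite HTOs. -/
theorem szilard_bound_implies_posdef
    (n : ℕ) (hn : 1 ≤ n) {b : ℝ} (hb : 0 < b)
    (q : Matrix (Fin n) (Fin n) ℂ) (hq : q.IsHermitian)
    (hlt : (Matrix.trace (mexp (-b • q))).re < 1)
    {A : Type*} [Fintype A] [DecidableEq A] [Nonempty A]
    (M : Fin n → Matrix A A ℂ) (hcomp : ∑ i, (M i)ᴴ * M i = 1) :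
    (∑ i, ∑ j, q i j • ((M i)ᴴ * M j)).PosDef :=
  szilard_bound_implies_posdef_general n hb q hq hlt M hcomp
end
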